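/- arXiv:quant-ph/0607148 — 10 statements merged into one kernel-verified Lean document; each statement's English description precedes it below -/
import Mathlib

section
/- Let N ≥ 2 be an integer that is not a power of a prime (i.e., N ≠ p^j for every prime p and every positive integer j), and let b be an integer relatively prime to N. Then the multiplicative order r of b modulo N satisfies r < N/2. -/
/-!
Split `N = a * m` with `a, m > 1` coprime. By Euler's theorem and the Chinese remainder theorem,
`b ^ lcm (φ a) (φ m) ≡ 1 [MOD N]`. If `a, m ≥ 3`, both totients are even, so
`lcm (φ a) (φ m) ≤ φ a * φ m / 2 < N / 2`; if the smaller factor is `2`, the lcm is `φ m < m = N / 2`.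
-/

open Nat

theorem Nat.exists_coprime_mul_eq_of_not_isPrimePow {n : ℕ} (hn : 2 ≤ n) (h : ¬IsPrimePow n) :
    ∃ a m : ℕ, a.Coprime m ∧ 1 < a ∧ 1 < m ∧ a * m = n := by
  have hn0 : n ≠ 0 := by omega
  set p := n.minFac
  have hp : p.Prime := minFac_prime (by omega)
  refine ⟨p ^ n.factorization p, ordCompl[p] n, (coprime_ordCompl hp hn0).pow_left _,
    one_lt_pow (hp.factorization_pos_of_dvd hn0 (minFac_dvd n)).ne' hp.one_lt, ?_,
    ordProj_mul_ordCompl_eq_self n p⟩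
  refine Nat.one_lt_iff_ne_zero_and_ne_one.2 ⟨(ordCompl_pos p hn0).ne', fun h1 => ?_⟩
  exact h ((exists_ordCompl_eq_one_iff_isPrimePow (by omega)).2 ⟨p, hp, h1⟩)

theorem Nat.orderOf_natCast_dvd_lcm_totient {a m b : ℕ} (ham : a.Coprime m)
    (hb : b.Coprime (a * m)) : orderOf (b : ZMod (a * m)) ∣ (φ a).lcm (φ m) := by
  apply orderOf_dvd_of_pow_eq_one
  rw [← Nat.cast_pow, ← Nat.cast_one, ZMod.natCast_eq_natCast_iff,
    ← Nat.modEq_and_modEq_iff_modEq_mul ham]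
  constructor
  · obtain ⟨k, hk⟩ := Nat.dvd_lcm_left (φ a) (φ m)
    rw [hk, pow_mul, ← one_pow k]
    exact (ModEq.pow_totient (Coprime.coprime_mul_right_right hb)).pow k
  · obtain ⟨k, hk⟩ := Nat.dvd_lcm_right (φ a) (φ m)
    rw [hk, pow_mul, ← one_pow k]
    exact (ModEq.pow_totient (Coprime.coprime_mul_left_right hb)).pow k

theorem Nat.two_mul_lcm_le_mul_of_even {x y : ℕ} (hx : Even x) (hy : Even y) (hx0 : x ≠ 0) :
    2 * x.lcm y ≤ x * y := by
  rw [← Nat.gcd_mul_lcm x y]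
  exact Nat.mul_le_mul_right _ (Nat.le_of_dvd (Nat.gcd_pos_of_pos_left _ (by omega))
    (Nat.dvd_gcd hx.two_dvd hy.two_dvd))

theorem Nat.two_mul_lcm_totient_lt_mul {a m : ℕ} (ha : 1 < a) (hm : 1 < m) :
    2 * (φ a).lcm (φ m) < a * m := by
  wlog hle : a ≤ m generalizing a m
  · rw [Nat.lcm_comm, mul_comm a]
    exact this hm ha (by omega)
  obtain rfl | ha2 := eq_or_lt_of_le (show 2 ≤ a from ha)
  · simpa [Nat.mul_comm 2] using totient_lt m hm
  calc 2 * (φ a).lcm (φ m) ≤ φ a * φ m :=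
        two_mul_lcm_le_mul_of_even (totient_even ha2) (totient_even (by omega))
          (totient_pos.2 (by omega)).ne'
    _ < a * m := Nat.mul_lt_mul_of_le_of_lt (totient_le a) (totient_lt m hm) (by omega)

theorem stmt_2 (N : ℕ) (hN : 2 ≤ N)
    (hnp : ∀ (p j : ℕ), p.Prime → 0 < j → N ≠ p ^ j)
    (b : ℕ) (hb : Nat.Coprime b N) :
    (orderOf (b : ZMod N) : ℝ) < N / 2 := by
  have hN' : ¬IsPrimePow N := by
    rw [isPrimePow_nat_iff]
    rintro ⟨p, j, hp, hj, rfl⟩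
    exact hnp p j hp hj rfl
  obtain ⟨a, m, ham, ha, hm, rfl⟩ := Nat.exists_coprime_mul_eq_of_not_isPrimePow hN hN'
  have hle : orderOf (b : ZMod (a * m)) ≤ (φ a).lcm (φ m) :=
    Nat.le_of_dvd (Nat.lcm_pos (totient_pos.2 (by omega)) (totient_pos.2 (by omega)))
      (Nat.orderOf_natCast_dvd_lcm_totient ham hb)
  have hlt := Nat.two_mul_lcm_totient_lt_mul ha hm
  rw [lt_div_iff₀ two_pos]
  exact_mod_cast (by omega : orderOf (b : ZMod (a * m)) * 2 < a * m)
end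

section
/- Let κ be a nonnegative integer, let r' ≥ 3 be an odd integer, set r = 2^κ · r', and let n be a positive integer with 2^n > r. Then for every integer k with 0 ≤ k ≤ 2^κ − 1 and every integer j with 1 ≤ j ≤ (r'−1)/2, there are exactly two integers s in {k·r'+1, k·r'+2, …, k·r'+r'−1} satisfying |⌊s·2^n/r⌉ − s·2^n/r| = j/r'. In particular, the set {|⌊s·2^n/r⌉ − s·2^n/r| : s = k·r'+1, …, k·r'+r'−1} equals {1/r', 2/r', …, ((r'−1)/2)/r'}. -/
/-!
With `r = 2^κ r'` and `2^n = 2^κ 2^m`, the number `s 2^n / r` equals `(s 2^m) / r'`, so its distance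
to the nearest integer is `min t (r' - t) / r'` where `t = s 2^m mod r'`. As `2^m` is a unit modulo
the odd number `r'`, `s ↦ t` maps the block `k r' + 1, …, k r' + r' - 1` bijectively onto the
nonzero residues `1, …, r' - 1`, and the folding `t ↦ min t (r' - t)` is exactly two-to-one from
these onto `1, …, (r' - 1)/2`.
-/

open Set

lemma Nat.mod_eq_sub_of_mem_Ico {q k s : ℕ} (hs : s ∈ Ico (k * q) (k * q + q)) :
    s % q = s - k * q := by
  obtain ⟨hs₁, hs₂⟩ := hs
  conv_lhs => rw [← Nat.sub_add_cancel hs₁]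
  rw [Nat.add_mul_mod_self_right, Nat.mod_eq_of_lt (show s - k * q < q by omega)]

lemma Nat.bijOn_mul_mod_Icc {a q : ℕ} (ha : a.Coprime q) (k : ℕ) :
    BijOn (fun s => s * a % q) (Icc (k * q + 1) (k * q + q - 1)) (Icc 1 (q - 1)) := by
  rcases q.eq_zero_or_pos with rfl | hq
  · simp
  have hmod : ∀ s ∈ Icc (k * q + 1) (k * q + q - 1), s % q = s - k * q :=
    fun s ⟨hs₁, hs₂⟩ => Nat.mod_eq_sub_of_mem_Ico ⟨by omega, by omega⟩
  have hmaps : MapsTo (fun s => s * a % q) (Icc (k * q + 1) (k * q + q - 1)) (Icc 1 (q - 1)) := by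
    rintro s ⟨hs₁, hs₂⟩
    show s * a % q ∈ Icc 1 (q - 1)
    have hsq := hmod s ⟨hs₁, hs₂⟩
    have hne : s * a % q ≠ 0 := fun h => by
      have : s % q = 0 :=
        Nat.mod_eq_zero_of_dvd (ha.symm.dvd_of_dvd_mul_right (Nat.dvd_of_mod_eq_zero h))
      omega
    have := Nat.mod_lt (s * a) hq
    exact ⟨by omega, by omega⟩
  have hinj : InjOn (fun s => s * a % q) (Icc (k * q + 1) (k * q + q - 1)) := by
    rintro s ⟨hs₁, hs₂⟩ t ⟨ht₁, ht₂⟩ hst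
    have h : s % q = t % q := Nat.ModEq.cancel_right_of_coprime ha.symm hst
    rw [hmod s ⟨hs₁, hs₂⟩, hmod t ⟨ht₁, ht₂⟩] at h
    omega
  have himage : (fun s => s * a % q) '' Icc (k * q + 1) (k * q + q - 1) = Icc 1 (q - 1) := by
    refine eq_of_subset_of_ncard_le (image_subset_iff.mpr hmaps) ?_
    rw [hinj.ncard_image, ncard_Icc_nat, ncard_Icc_nat]
    omega
  exact ⟨hmaps, hinj, himage.ge⟩

lemma Set.BijOn.ncard_inter_preimage {α β : Type*} {f : α → β} {s : Set α} {t : Set β}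
    (h : BijOn f s t) (p : Set β) : (s ∩ f ⁻¹' p).ncard = (t ∩ p).ncard := by
  rw [← h.image_eq, ← image_inter_preimage, (h.injOn.mono inter_subset_left).ncard_image]

lemma Odd.image_min_sub_Icc {q : ℕ} (hq : Odd q) :
    (fun t => min t (q - t)) '' Icc 1 (q - 1) = Icc 1 ((q - 1) / 2) := by
  obtain ⟨w, rfl⟩ := hq
  ext i
  simp only [mem_image, mem_Icc]
  constructor
  · rintro ⟨t, ht, rfl⟩
    omega
  · intro hi
    exact ⟨i, by omega, by omega⟩

lemma Odd.Icc_inter_min_sub_eq {q j : ℕ} (hq : Odd q) (hj₁ : 1 ≤ j) (hj₂ : j ≤ (q - 1) / 2) :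
    Icc 1 (q - 1) ∩ {t | min t (q - t) = j} = {j, q - j} := by
  obtain ⟨w, rfl⟩ := hq
  ext t
  simp only [mem_inter_iff, mem_Icc, mem_ofPred_eq, mem_insert_iff, mem_singleton_iff]
  omega

theorem stmt_3_general (κ r' n : ℕ) (hodd : Odd r')
    (r : ℕ) (hr : r = 2 ^ κ * r') (hrn : r < 2 ^ n)
    (k : ℕ) (j : ℕ) (hj1 : 1 ≤ j) (hj2 : j ≤ (r' - 1) / 2) :
    ({s : ℕ | s ∈ Set.Icc (k * r' + 1) (k * r' + r' - 1) ∧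
        |((round (((s : ℝ) * 2 ^ n) / r) : ℤ) : ℝ) - (s : ℝ) * 2 ^ n / r| = (j : ℝ) / r'}.ncard = 2)
    ∧
    ((fun s : ℕ => |((round (((s : ℝ) * 2 ^ n) / r) : ℤ) : ℝ) - (s : ℝ) * 2 ^ n / r|) ''
        Set.Icc (k * r' + 1) (k * r' + r' - 1)
      = (fun i : ℕ => (i : ℝ) / r') '' Set.Icc 1 ((r' - 1) / 2)) := by
  have hκn : κ ≤ n := by
    have : 2 ^ κ < 2 ^ n := (Nat.le_mul_of_pos_right _ hodd.pos).trans_lt (hr ▸ hrn)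
    exact (Nat.pow_lt_pow_iff_right (by norm_num)).mp this |>.le
  obtain ⟨m, rfl⟩ := Nat.exists_eq_add_of_le hκn
  set ψ : ℕ → ℕ := fun s => s * 2 ^ m % r'
  have hψ : BijOn ψ (Icc (k * r' + 1) (k * r' + r' - 1)) (Icc 1 (r' - 1)) :=
    Nat.bijOn_mul_mod_Icc (Nat.Coprime.pow_left m (Nat.coprime_two_left.mpr hodd)) k
  have hr' : (r' : ℝ) ≠ 0 := by exact_mod_cast hodd.pos.ne'
  have hdist (s : ℕ) : |((round (((s : ℝ) * 2 ^ (κ + m)) / r) : ℤ) : ℝ) - (s : ℝ) * 2 ^ (κ + m) / r|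
      = (min (ψ s) (r' - ψ s) : ℕ) / r' := by
    have : (s : ℝ) * 2 ^ (κ + m) / r = ((s * 2 ^ m : ℕ) : ℝ) / r' := by
      rw [hr]; push_cast; rw [pow_add]; field_simp
    rw [this, abs_sub_comm, abs_sub_round_div_natCast_eq]
  constructor
  · simp only [hdist, div_left_inj' hr', Nat.cast_inj]
    refine (hψ.ncard_inter_preimage {t | min t (r' - t) = j}).trans ?_
    rw [hodd.Icc_inter_min_sub_eq hj1 hj2, ncard_pair]
    obtain ⟨w, rfl⟩ := hodd
    omega
  · simp only [hdist]
    rw [← hodd.image_min_sub_Icc, ← hψ.image_eq, image_image, image_image]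

theorem stmt_3 (κ r' n : ℕ) (hr'3 : 3 ≤ r') (hodd : Odd r')
    (r : ℕ) (hr : r = 2 ^ κ * r') (hn : 0 < n) (hrn : r < 2 ^ n)
    (k : ℕ) (hk : k ≤ 2 ^ κ - 1) (j : ℕ) (hj1 : 1 ≤ j) (hj2 : j ≤ (r' - 1) / 2) :
    ({s : ℕ | s ∈ Set.Icc (k * r' + 1) (k * r' + r' - 1) ∧
        |((round (((s : ℝ) * 2 ^ n) / r) : ℤ) : ℝ) - (s : ℝ) * 2 ^ n / r| = (j : ℝ) / r'}.ncard = 2)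
    ∧
    ((fun s : ℕ => |((round (((s : ℝ) * 2 ^ n) / r) : ℤ) : ℝ) - (s : ℝ) * 2 ^ n / r|) ''
        Set.Icc (k * r' + 1) (k * r' + r' - 1)
      = (fun i : ℕ => (i : ℝ) / r') '' Set.Icc 1 ((r' - 1) / 2)) :=
  stmt_3_general κ r' n hodd r hr hrn k j hj1 hj2
end

section
/- Let κ be a nonnegative integer, let r' ≥ 3 be an odd integer, set r = 2^κ · r', let n be a positive integer with 2^n > r, and let m be a positive integer. Then ∑_{s=1}^{r−1} (1/(2^n·m)) · |∑_{k=0}^{m−1} exp(2πi·k·r·⌊s·2^n/r⌉/2^n)|² = 2^κ · (2/(2^n·m)) · ∑_{j=1}^{(r'−1)/2} sin²(π·m·j/2^{n−κ}) / sin²(π·j/2^{n−κ}) + (2^κ − 1)·m/2^n. -/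
/-!
Write `r = 2^κ r'` and `N = 2^(n-κ)`, and let `e_s ∈ (-r'/2, r'/2)` be the centred residue of
`s N` modulo `r'`. Since `r'` is odd, `s 2^n / r = s N / r'` lies strictly within `1/2` of
`(s N - e_s) / r'`, so `r ⌊s 2^n / r⌉ / 2^n = s - e_s / N` and the `s`-th term is the geometric sum
`|∑_{k<m} e^{-2πi k e_s / N}|² = sin²(π m e_s / N) / sin²(π e_s / N)` (or `m²` when `e_s = 0`).
As `s` runs over `[0, r)`, `s mod r'` runs `2^κ` times over `ℤ/r'`, and since `N` is a unit there,
`e_s` runs `2^κ` times over `[-(r'-1)/2, (r'-1)/2]`. Pairing `±j` and removing `s = 0` gives the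
formula.
-/

open Real Complex Finset

noncomputable def expSumNormSq (m : ℕ) (x : ℝ) : ℝ :=
  ‖∑ k ∈ range m, Complex.exp (2 * π * I * k * x)‖ ^ 2

lemma expSumNormSq_zero_right (m : ℕ) : expSumNormSq m 0 = m ^ 2 := by
  simp [expSumNormSq]

lemma expSumNormSq_neg (m : ℕ) (x : ℝ) : expSumNormSq m (-x) = expSumNormSq m x := by
  rw [expSumNormSq, expSumNormSq, ← Complex.norm_conj, map_sum]
  congr 3 with k
  rw [← Complex.exp_conj]
  simp only [map_mul, map_ofNat, map_neg, Complex.conj_ofReal, Complex.conj_I, map_natCast,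
    ofReal_neg]
  ring_nf

lemma expSumNormSq_intCast_add (m : ℕ) (z : ℤ) (x : ℝ) :
    expSumNormSq m (z + x) = expSumNormSq m x := by
  unfold expSumNormSq
  congr 3 with k
  rw [show 2 * π * I * k * ((z + x : ℝ) : ℂ) = (k * z : ℤ) * (2 * π * I) + 2 * π * I * k * x by
    push_cast; ring, Complex.exp_add, exp_int_mul_two_pi_mul_I, one_mul]

lemma expSumNormSq_eq_sin_sq_div (m : ℕ) {x : ℝ} (hx : Real.sin (π * x) ≠ 0) :
    expSumNormSq m x = Real.sin (π * m * x) ^ 2 / Real.sin (π * x) ^ 2 := by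
  have norm_sub_one (y : ℝ) : ‖Complex.exp (2 * π * I * y) - 1‖ = 2 * |Real.sin (π * y)| := by
    rw [show 2 * π * I * y = I * ((2 * π * y : ℝ) : ℂ) by push_cast; ring,
      norm_exp_I_mul_ofReal_sub_one, norm_mul, Real.norm_two, Real.norm_eq_abs]
    ring_nf
  have hz : Complex.exp (2 * π * I * x) ≠ 1 := by
    rw [← sub_ne_zero, ← norm_ne_zero_iff, norm_sub_one]
    positivity
  have hpow : Complex.exp (2 * π * I * x) ^ m = Complex.exp (2 * π * I * ((m * x : ℝ) : ℂ)) := by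
    rw [← Complex.exp_nat_mul]; push_cast; ring_nf
  have hgeom : ∑ k ∈ range m, Complex.exp (2 * π * I * k * x)
      = ∑ k ∈ range m, Complex.exp (2 * π * I * x) ^ k := by
    congr 1 with k
    rw [← Complex.exp_nat_mul]; ring_nf
  rw [expSumNormSq, hgeom, geom_sum_eq hz, norm_div, hpow, norm_sub_one, norm_sub_one, div_pow,
    mul_pow, mul_pow, sq_abs, sq_abs, mul_div_mul_left _ _ (by norm_num), mul_assoc]

lemma expSumNormSq_div_add_neg (m : ℕ) {x y : ℝ} (hx : 0 < x) (hxy : x < y) :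
    expSumNormSq m (x / y) + expSumNormSq m (-x / y)
      = 2 * (Real.sin (π * m * x / y) ^ 2 / Real.sin (π * x / y) ^ 2) := by
  have hsin : Real.sin (π * (x / y)) ≠ 0 :=
    (Real.sin_pos_of_pos_of_lt_pi (by have := hx.trans hxy; positivity)
      (mul_lt_of_lt_one_right Real.pi_pos ((div_lt_one (hx.trans hxy)).mpr hxy))).ne'
  rw [neg_div, expSumNormSq_neg, expSumNormSq_eq_sin_sq_div m hsin, ← mul_div_assoc,
    ← mul_div_assoc, two_mul]

-- Oddness of `b` excludes the tie `|a/b - round (a/b)| = 1/2`.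
lemma natCast_mul_round_div_eq_sub_valMinAbs {b : ℕ} (hb : Odd b) (a : ℤ) :
    (b : ℤ) * round ((a : ℝ) / b) = a - (a : ZMod b).valMinAbs := by
  have : NeZero b := ⟨hb.pos.ne'⟩
  set e := (a : ZMod b).valMinAbs
  obtain ⟨q, hq⟩ : (b : ℤ) ∣ a - e := by
    rw [← ZMod.intCast_zmod_eq_zero_iff_dvd, Int.cast_sub, ZMod.coe_valMinAbs, sub_self]
  have he : 2 * |e| < b := by
    have := ZMod.natAbs_valMinAbs_le (a : ZMod b)
    obtain ⟨w, rfl⟩ := hb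
    rw [Int.abs_eq_natAbs]
    omega
  have hbR : (0 : ℝ) < b := by exact_mod_cast hb.pos
  have heR : 2 * |(e : ℝ)| < b := by exact_mod_cast he
  have hdiv : (a : ℝ) / b = q + e / b := by
    rw [show (a : ℝ) = b * q + e by exact_mod_cast (sub_eq_iff_eq_add.mp hq)]
    field_simp
  rw [hdiv, round_intCast_add, round_eq_zero_iff.mpr, add_zero, hq]
  rw [Set.mem_Ico, le_div_iff₀ hbR, div_lt_iff₀ hbR]
  constructor <;> linarith [abs_lt.mp (show |(e : ℝ)| < b / 2 by linarith)]

lemma natCast_mul_round_div_div_two_pow {b : ℕ} (hb : Odd b) {κ n : ℕ} (hκn : κ ≤ n) (s : ℕ) :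
    ((2 ^ κ * b : ℕ) : ℝ) * round ((s : ℝ) * 2 ^ n / ((2 ^ κ * b : ℕ) : ℝ)) / 2 ^ n
      = s - (((s : ZMod b) * 2 ^ (n - κ)).valMinAbs : ℝ) / 2 ^ (n - κ) := by
  have h2n : (2 : ℝ) ^ n = 2 ^ κ * 2 ^ (n - κ) := by rw [← pow_add, Nat.add_sub_cancel' hκn]
  have hb0 : (b : ℝ) ≠ 0 := by exact_mod_cast hb.pos.ne'
  have hdiv : (s : ℝ) * 2 ^ n / ((2 ^ κ * b : ℕ) : ℝ) = ((s * 2 ^ (n - κ) : ℤ) : ℝ) / b := by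
    rw [h2n]; push_cast; field_simp
  have hroundR := congrArg (Int.cast : ℤ → ℝ)
    (natCast_mul_round_div_eq_sub_valMinAbs hb (s * 2 ^ (n - κ)))
  rw [hdiv, h2n]
  push_cast at hroundR ⊢
  field_simp
  linear_combination hroundR

lemma norm_sq_sum_exp_mul_round_eq {b : ℕ} (hb : Odd b) {κ n : ℕ} (hκn : κ ≤ n) (m s : ℕ) :
    ‖∑ k ∈ range m, Complex.exp (2 * π * I * k * ((2 ^ κ * b : ℕ) : ℂ) *
        ((round ((s : ℝ) * 2 ^ n / ((2 ^ κ * b : ℕ) : ℝ)) : ℤ) : ℂ) / 2 ^ n)‖ ^ 2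
      = expSumNormSq m (((s : ZMod b) * 2 ^ (n - κ)).valMinAbs / 2 ^ (n - κ)) := by
  rw [← expSumNormSq_neg, ← expSumNormSq_intCast_add m s, Int.cast_natCast, ← sub_eq_add_neg,
    ← natCast_mul_round_div_div_two_pow hb hκn, expSumNormSq]
  congr 3 with k
  push_cast
  ring_nf

lemma Int.sum_Icc_neg_natCast_self {M : Type*} [AddCommMonoid M] (f : ℤ → M) (t : ℕ) :
    ∑ j ∈ Icc (-(t : ℤ)) t, f j = f 0 + ∑ j ∈ Icc 1 t, (f j + f (-j)) := by
  induction t with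
  | zero => simp
  | succ t ih =>
    have hIcc : Icc (-((t + 1 : ℕ) : ℤ)) (t + 1 : ℕ)
        = insert ((t + 1 : ℕ) : ℤ) (insert (-((t + 1 : ℕ) : ℤ)) (Icc (-(t : ℤ)) t)) := by
      ext j; simp only [mem_Icc, mem_insert]; omega
    rw [hIcc, sum_insert (by simp only [mem_insert, mem_Icc]; omega), sum_insert (by simp), ih,
      sum_Icc_succ_top (by omega)]
    push_cast
    abel

lemma ZMod.sum_valMinAbs_of_odd {M : Type*} [AddCommMonoid M] {b : ℕ} [NeZero b] (hb : Odd b)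
    (f : ℤ → M) :
    ∑ x : ZMod b, f x.valMinAbs = f 0 + ∑ j ∈ Icc 1 (b / 2), (f j + f (-j)) := by
  rw [← Int.sum_Icc_neg_natCast_self]
  refine sum_nbij' valMinAbs (↑) (fun x _ => ?_) (by simp) (fun x _ => ZMod.coe_valMinAbs x)
    (fun j hj => ?_) (fun _ _ => rfl)
  · have := ZMod.natAbs_valMinAbs_le x
    simp only [mem_Icc]
    omega
  · obtain ⟨w, rfl⟩ := hb
    rw [mem_Icc] at hj
    rw [ZMod.valMinAbs_spec]
    refine ⟨rfl, ?_, ?_⟩ <;> omega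

lemma ZMod.sum_range_mul_natCast {M : Type*} [AddCommMonoid M] (a b : ℕ) [NeZero b]
    (f : ZMod b → M) : ∑ s ∈ range (a * b), f s = a • ∑ x : ZMod b, f x := by
  induction a with
  | zero => simp
  | succ a ih =>
    rw [add_mul, one_mul, sum_range_add, ih, succ_nsmul]
    congr 1
    simp only [Nat.cast_add, Nat.cast_mul, ZMod.natCast_self, mul_zero, zero_add]
    exact sum_nbij' (↑) ZMod.val (by simp) (fun x _ => mem_range.mpr (ZMod.val_lt x))
      (fun s hs => ZMod.val_cast_of_lt (mem_range.mp hs)) (fun x _ => ZMod.natCast_zmod_val x)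
      (fun _ _ => rfl)

lemma ZMod.sum_range_mul_valMinAbs_mul_unit {M : Type*} [AddCommMonoid M] {b : ℕ} [NeZero b]
    (hb : Odd b) (a : ℕ) (u : (ZMod b)ˣ) (f : ℤ → M) :
    ∑ s ∈ range (a * b), f ((s : ZMod b) * u).valMinAbs
      = a • (f 0 + ∑ j ∈ Icc 1 (b / 2), (f j + f (-j))) := by
  rw [ZMod.sum_range_mul_natCast _ _ (fun x : ZMod b => f (x * u).valMinAbs),
    ← sum_valMinAbs_of_odd hb]
  exact congrArg (a • ·) (Equiv.sum_comp (Units.mulRight u) (fun x => f x.valMinAbs))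

lemma sum_range_expSumNormSq_valMinAbs_div (m : ℕ) {b : ℕ} [NeZero b] (hb : Odd b) (a : ℕ)
    (u : (ZMod b)ˣ) {N : ℝ} (hbN : b < N) :
    ∑ s ∈ range (a * b), expSumNormSq m (((s : ZMod b) * u).valMinAbs / N)
      = a * (m ^ 2 + 2 * ∑ j ∈ Icc 1 ((b - 1) / 2),
          Real.sin (π * m * j / N) ^ 2 / Real.sin (π * j / N) ^ 2) := by
  rw [ZMod.sum_range_mul_valMinAbs_mul_unit hb a u (fun j : ℤ => expSumNormSq m (j / N)),
    nsmul_eq_mul, show b / 2 = (b - 1) / 2 by rw [Nat.odd_iff] at hb; omega, mul_sum]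
  congr 2
  · simp [expSumNormSq_zero_right]
  refine sum_congr rfl fun j hj => ?_
  have hjb : j < b := by have := (mem_Icc.mp hj).2; have := hb.pos; omega
  simp only [Int.cast_natCast, Int.cast_neg]
  exact expSumNormSq_div_add_neg m (by have := (mem_Icc.mp hj).1; positivity)
    ((Nat.cast_lt.mpr hjb).trans hbN)

theorem stmt_4_general (κ r' n m : ℕ) (hodd : Odd r')
    (r : ℕ) (hr : r = 2 ^ κ * r') (hrn : r < 2 ^ n) (hm : 0 < m) :
    ∑ s ∈ Finset.Icc 1 (r - 1),
        (1 / ((2 : ℝ) ^ n * m)) *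
          (‖∑ k ∈ Finset.range m,
            Complex.exp (2 * Real.pi * Complex.I * k * r *
              ((round (((s : ℝ) * 2 ^ n) / r) : ℤ) : ℂ) / 2 ^ n)‖) ^ 2
      =
    (2 : ℝ) ^ κ * (2 / ((2 : ℝ) ^ n * m)) *
        ∑ j ∈ Finset.Icc 1 ((r' - 1) / 2),
          Real.sin (Real.pi * m * j / 2 ^ (n - κ)) ^ 2 /
            Real.sin (Real.pi * j / 2 ^ (n - κ)) ^ 2
      + ((2 : ℝ) ^ κ - 1) * m / 2 ^ n := by
  subst hr
  have : NeZero r' := ⟨hodd.pos.ne'⟩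
  have hκn : κ < n := (Nat.pow_lt_pow_iff_right (by norm_num)).mp
    ((Nat.le_mul_of_pos_right _ hodd.pos).trans_lt hrn)
  have hr'N : r' < 2 ^ (n - κ) :=
    Nat.lt_of_mul_lt_mul_left (by rwa [← pow_add, Nat.add_sub_cancel' hκn.le])
  obtain ⟨u, hu⟩ : IsUnit ((2 : ZMod r') ^ (n - κ)) :=
    (by exact_mod_cast (ZMod.isUnit_iff_coprime 2 r').mpr (Nat.coprime_two_left.mpr hodd) :
      IsUnit (2 : ZMod r')).pow _
  have hsum := sum_range_expSumNormSq_valMinAbs_div m hodd (2 ^ κ) u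
    (N := 2 ^ (n - κ)) (by exact_mod_cast hr'N)
  rw [sum_range_eq_add_Ico _ (Nat.mul_pos (by positivity) hodd.pos),
    ← Icc_sub_one_right_eq_Ico_of_not_isMin (by simpa using hodd.pos.ne')] at hsum
  simp only [Nat.cast_zero, zero_mul, ZMod.valMinAbs_zero, Int.cast_zero, zero_div,
    expSumNormSq_zero_right, Nat.cast_pow, Nat.cast_ofNat] at hsum
  simp_rw [norm_sq_sum_exp_mul_round_eq hodd hκn.le, ← hu]
  rw [← mul_sum, eq_sub_of_add_eq' hsum]
  field_simp
  ring

theorem stmt_4 (κ r' n m : ℕ) (hr'3 : 3 ≤ r') (hodd : Odd r')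
    (r : ℕ) (hr : r = 2 ^ κ * r') (hn : 0 < n) (hrn : r < 2 ^ n) (hm : 0 < m) :
    ∑ s ∈ Finset.Icc 1 (r - 1),
        (1 / ((2 : ℝ) ^ n * m)) *
          (‖∑ k ∈ Finset.range m,
            Complex.exp (2 * Real.pi * Complex.I * k * r *
              ((round (((s : ℝ) * 2 ^ n) / r) : ℤ) : ℂ) / 2 ^ n)‖) ^ 2
      =
    (2 : ℝ) ^ κ * (2 / ((2 : ℝ) ^ n * m)) *
        ∑ j ∈ Finset.Icc 1 ((r' - 1) / 2),
          Real.sin (Real.pi * m * j / 2 ^ (n - κ)) ^ 2 /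
            Real.sin (Real.pi * j / 2 ^ (n - κ)) ^ 2
      + ((2 : ℝ) ^ κ - 1) * m / 2 ^ n :=
  stmt_4_general κ r' n m hodd r hr hrn hm
end

section
/- Let N and r be positive integers with 2r < N, let n be a positive integer with N² ≤ 2^n, let q be a nonnegative integer, and let y and s be integers with 1 ≤ s ≤ r−1. If |y − s·2^{n+q}/r| ≤ 2^{1+q}, then |y/2^{n+q} − s/r| < 1/(2r²). -/
/-! Dividing the hypothesis by `2 ^ (n + q)` bounds the error by `2 ^ (1 + q) / 2 ^ (n + q) = 2 / 2 ^ n`,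
and `2 r < N` with `N ² ≤ 2 ^ n` gives `4 r² < 2 ^ n`, i.e. `2 / 2 ^ n < 1 / (2 r²)`. -/

lemma abs_div_sub_eq_abs_sub_mul_div {K : Type*} [Field K] [LinearOrder K] [IsStrictOrderedRing K]
    {P : K} (hP : 0 < P) (y x : K) : |y / P - x| = |y - x * P| / P := by
  rw [← abs_of_pos hP, ← abs_div, abs_of_pos hP, sub_div, mul_div_cancel_right₀ x hP.ne']

theorem stmt_5_general (N r n q : ℕ) (hr : 0 < r) (h2r : 2 * r < N)
    (hN2 : N ^ 2 ≤ 2 ^ n) (y s : ℤ)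
    (h : |(y : ℝ) - (s : ℝ) * 2 ^ (n + q) / r| ≤ 2 ^ (1 + q)) :
    |(y : ℝ) / 2 ^ (n + q) - (s : ℝ) / r| < 1 / (2 * (r : ℝ) ^ 2) := by
  have hr' : (0 : ℝ) < r := by exact_mod_cast hr
  have hsq : (2 * r) ^ 2 < 2 ^ n := (Nat.pow_lt_pow_left h2r two_ne_zero).trans_le hN2
  have hsq' : 4 * (r : ℝ) ^ 2 < 2 ^ n := by
    have := (Nat.cast_lt (α := ℝ)).2 hsq
    push_cast at this
    linarith
  calc |(y : ℝ) / 2 ^ (n + q) - (s : ℝ) / r|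
      = |(y : ℝ) - (s : ℝ) * 2 ^ (n + q) / r| / 2 ^ (n + q) := by
        rw [abs_div_sub_eq_abs_sub_mul_div (by positivity), div_mul_eq_mul_div]
    _ ≤ 2 ^ (1 + q) / 2 ^ (n + q) := by gcongr
    _ = 2 / 2 ^ n := by rw [pow_add, pow_add]; field_simp
    _ < 1 / (2 * (r : ℝ) ^ 2) := by
        rw [div_lt_div_iff₀ (by positivity) (by positivity)]
        linarith

theorem stmt_5 (N r n q : ℕ) (hN : 0 < N) (hr : 0 < r) (h2r : 2 * r < N)
    (hn : 0 < n) (hN2 : N ^ 2 ≤ 2 ^ n) (y s : ℤ) (hs1 : 1 ≤ s) (hs2 : s ≤ (r : ℤ) - 1)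
    (h : |(y : ℝ) - (s : ℝ) * 2 ^ (n + q) / r| ≤ 2 ^ (1 + q)) :
    |(y : ℝ) / 2 ^ (n + q) - (s : ℝ) / r| < 1 / (2 * (r : ℝ) ^ 2) :=
  stmt_5_general N r n q hr h2r hN2 y s h
end

section
/- Let r ≥ 3 be an odd integer, let n and n₀ be positive integers with n > n₀ and r < 2^{n₀}, and let m be a positive integer with 2^n/r − 1 < m < 2^n/r + 1. Then (2/(2^n·m)) · ∑_{j=1}^{(r−1)/2} sin²(π·m·j/2^n) / sin²(π·j/2^n) > (1 − 1/2^{n−n₀} − 1/r) · (1 − (π²/36)·((r+1)/r + 1/2^{n−n₀−1} + 1/2^{2(n−n₀)})). -/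
/-!
Bounding `sin (u t) ≥ u t - (u t)³/6` and `sin t ≤ t` gives
`sin² (u t) / sin² t ≥ u² (1 - (u t)² / 3)` termwise, so the sum is at least
`K u² - π² u⁴ K (K + 1) (2K + 1) / (18 N²)` with `N = 2ⁿ`, `K = (r - 1)/2`, `u = m`.
With `x = 2^(n₀ - n)`, the choice `m > N/r - 1` bounds the first factor `2 K m / N` below by
`1 - x - 1/r`, and `m < N/r + 1` bounds the correction `π² m² r (r + 1) / (36 N²)` above by
`π²/36 ((r + 1)/r + 2x + x²)`, which stays below `1`.
-/

open Real Finset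

theorem Real.sq_mul_one_sub_sq_div_three_le_sin_sq (x : ℝ) :
    x ^ 2 * (1 - x ^ 2 / 3) ≤ sin x ^ 2 := by
  rcases le_or_gt 3 (x ^ 2) with hx | hx
  · nlinarith [sq_nonneg (sin x)]
  · have hsin : |x| - |x| ^ 3 / 6 ≤ sin |x| := sin_ge_sub_cube (abs_nonneg x)
    have hfactor : |x| - |x| ^ 3 / 6 = |x| * (1 - x ^ 2 / 6) := by rw [← sq_abs x]; ring
    have hpos : 0 ≤ |x| - |x| ^ 3 / 6 := by
      rw [hfactor]; exact mul_nonneg (abs_nonneg x) (by linarith)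
    calc x ^ 2 * (1 - x ^ 2 / 3) ≤ x ^ 2 * (1 - x ^ 2 / 6) ^ 2 := by
          nlinarith [sq_nonneg x, sq_nonneg (x ^ 3)]
      _ = (|x| - |x| ^ 3 / 6) ^ 2 := by rw [hfactor, mul_pow, sq_abs]
      _ ≤ sin |x| ^ 2 := pow_le_pow_left₀ hpos hsin 2
      _ = sin x ^ 2 := by rcases abs_choice x with h | h <;> simp [h]

theorem Real.sq_mul_one_sub_le_sin_mul_sq_div_sin_sq (u : ℝ) {t : ℝ} (ht : sin t ≠ 0) :
    u ^ 2 * (1 - (u * t) ^ 2 / 3) ≤ sin (u * t) ^ 2 / sin t ^ 2 := by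
  rcases le_or_gt (1 - (u * t) ^ 2 / 3) 0 with hc | hc
  · exact (mul_nonpos_of_nonneg_of_nonpos (sq_nonneg u) hc).trans (by positivity)
  · rw [le_div_iff₀ (by positivity)]
    calc u ^ 2 * (1 - (u * t) ^ 2 / 3) * sin t ^ 2
        ≤ u ^ 2 * (1 - (u * t) ^ 2 / 3) * t ^ 2 :=
          mul_le_mul_of_nonneg_left sin_sq_le_sq (by positivity)
      _ = (u * t) ^ 2 * (1 - (u * t) ^ 2 / 3) := by ring
      _ ≤ sin (u * t) ^ 2 := sq_mul_one_sub_sq_div_three_le_sin_sq _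

theorem sum_Icc_sq (K : ℕ) :
    ∑ j ∈ Icc 1 K, (j : ℝ) ^ 2 = K * (K + 1) * (2 * K + 1) / 6 := by
  induction K with
  | zero => simp
  | succ k ih =>
    rw [sum_Icc_succ_top (by omega), ih]
    push_cast
    ring

theorem sum_sin_mul_sq_div_sin_sq_ge (K : ℕ) {N : ℝ} (hKN : K < N) (u : ℝ) :
    K * u ^ 2 - π ^ 2 * u ^ 4 / (3 * N ^ 2) * (K * (K + 1) * (2 * K + 1) / 6)
      ≤ ∑ j ∈ Icc 1 K, sin (π * u * j / N) ^ 2 / sin (π * j / N) ^ 2 := by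
  have hN : 0 < N := lt_of_le_of_lt K.cast_nonneg hKN
  have hterm : ∀ j ∈ Icc 1 K, u ^ 2 - π ^ 2 * u ^ 4 / (3 * N ^ 2) * (j : ℝ) ^ 2
      ≤ sin (π * u * j / N) ^ 2 / sin (π * j / N) ^ 2 := by
    intro j hj
    obtain ⟨hj1, hjK⟩ := mem_Icc.mp hj
    have hj0 : (0 : ℝ) < j := by exact_mod_cast hj1
    have hjN : (j : ℝ) < N := lt_of_le_of_lt (by exact_mod_cast hjK) hKN
    have hsin : sin (π * j / N) ≠ 0 := by
      refine (sin_pos_of_pos_of_lt_pi (by positivity) ?_).ne'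
      rw [div_lt_iff₀ hN]
      exact mul_lt_mul_of_pos_left hjN pi_pos
    have := sq_mul_one_sub_le_sin_mul_sq_div_sin_sq u hsin
    rw [show u * (π * j / N) = π * u * j / N by ring] at this
    convert this using 1
    field_simp
  calc K * u ^ 2 - π ^ 2 * u ^ 4 / (3 * N ^ 2) * (K * (K + 1) * (2 * K + 1) / 6)
      = ∑ j ∈ Icc 1 K, (u ^ 2 - π ^ 2 * u ^ 4 / (3 * N ^ 2) * (j : ℝ) ^ 2) := by
        rw [sum_sub_distrib, sum_const, Nat.card_Icc, ← mul_sum, sum_Icc_sq, nsmul_eq_mul]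
        simp
    _ ≤ _ := sum_le_sum hterm

section Factors

variable {N r u x : ℝ}

theorem one_sub_sub_inv_lt_mul_div (hr : 1 ≤ r) (hN : 0 < N) (hx : (r + 1) / N ≤ x)
    (hu : N / r - 1 < u) : 1 - x - 1 / r < (r - 1) * u / N := by
  have hr0 : 0 < r := by linarith
  have hrN : (r - 1) / N < x := lt_of_lt_of_le (by gcongr; linarith) hx
  calc 1 - x - 1 / r < 1 - (r - 1) / N - 1 / r := by linarith
    _ = (r - 1) * (N / r - 1) / N := by field_simp; ring
    _ ≤ (r - 1) * u / N := by gcongr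

theorem sq_mul_mul_succ_div_sq_lt (hr : 0 < r) (hN : 0 < N) (hu0 : 0 ≤ u)
    (hu : u < N / r + 1) (hx : (r + 1) / N ≤ x) :
    u ^ 2 * r * (r + 1) / N ^ 2 < (r + 1) / r + 2 * x + x ^ 2 := by
  have hur : u * r < N + r := by
    rw [← sub_lt_iff_lt_add, lt_div_iff₀ hr] at hu
    linarith
  have hx0 : 0 ≤ (r + 1) / N := by positivity
  calc u ^ 2 * r * (r + 1) / N ^ 2 = (u * r) ^ 2 * (r + 1) / (r * N ^ 2) := by
        field_simp
    _ < (N + r) ^ 2 * (r + 1) / (r * N ^ 2) := by gcongr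
    _ = (r + 1) / r + 2 * ((r + 1) / N) + r * (r + 1) / N ^ 2 := by field_simp; ring
    _ ≤ (r + 1) / r + 2 * ((r + 1) / N) + ((r + 1) / N) ^ 2 := by
        gcongr
        rw [div_pow]
        gcongr
        nlinarith
    _ ≤ (r + 1) / r + 2 * x + x ^ 2 := by gcongr

theorem one_sub_pi_sq_div_mul_pos (hr : 1 ≤ r) (hx0 : 0 ≤ x) (hx : x ≤ 1 / 2) :
    0 < 1 - π ^ 2 / 36 * ((r + 1) / r + 2 * x + x ^ 2) := by
  have hr2 : (r + 1) / r ≤ 2 := by rw [div_le_iff₀ (by linarith)]; linarith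
  have hπ : π ^ 2 < 9.9225 := by nlinarith [pi_pos, pi_lt_d2]
  have hE : 0 ≤ (r + 1) / r + 2 * x + x ^ 2 := by positivity
  nlinarith [mul_le_mul_of_nonneg_right hπ.le hE]

theorem one_sub_mul_one_sub_lt_two_div_mul {K : ℕ} (hrK : r = 2 * K + 1) (hN : 0 < N)
    (hu : 0 < u) (hxr : (r + 1) / N ≤ x) (hx : x ≤ 1 / 2)
    (hu1 : N / r - 1 < u) (hu2 : u < N / r + 1) :
    (1 - x - 1 / r) * (1 - π ^ 2 / 36 * ((r + 1) / r + 2 * x + x ^ 2))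
      < 2 / (N * u) *
          (K * u ^ 2 - π ^ 2 * u ^ 4 / (3 * N ^ 2) * (K * (K + 1) * (2 * K + 1) / 6)) := by
  have hr : 1 ≤ r := by rw [hrK]; linarith [K.cast_nonneg (α := ℝ)]
  have hx0 : 0 ≤ x := le_trans (by positivity) hxr
  calc (1 - x - 1 / r) * (1 - π ^ 2 / 36 * ((r + 1) / r + 2 * x + x ^ 2))
      < (r - 1) * u / N * (1 - π ^ 2 / 36 * ((r + 1) / r + 2 * x + x ^ 2)) :=
        mul_lt_mul_of_pos_right (one_sub_sub_inv_lt_mul_div hr hN hxr hu1)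
          (one_sub_pi_sq_div_mul_pos hr hx0 hx)
    _ ≤ (r - 1) * u / N * (1 - π ^ 2 / 36 * (u ^ 2 * r * (r + 1) / N ^ 2)) := by
        gcongr
        exact (sq_mul_mul_succ_div_sq_lt (by linarith) hN hu.le hu2 hxr).le
    _ = _ := by rw [hrK]; field_simp; ring

end Factors

theorem stmt_6_general (r n n₀ m : ℕ) (hodd : Odd r)
    (hnn₀ : n₀ < n) (hr2 : r < 2 ^ n₀) (hm : 0 < m)
    (hm1 : (2 : ℝ) ^ n / r - 1 < m) (hm2 : (m : ℝ) < 2 ^ n / r + 1) :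
    (2 / ((2 : ℝ) ^ n * m)) *
        ∑ j ∈ Finset.Icc 1 ((r - 1) / 2),
          Real.sin (π * m * j / 2 ^ n) ^ 2 / Real.sin (π * j / 2 ^ n) ^ 2
      >
    (1 - 1 / (2 : ℝ) ^ ((n : ℤ) - n₀) - 1 / r) *
      (1 - (π ^ 2 / 36) * (((r : ℝ) + 1) / r + 1 / (2 : ℝ) ^ ((n : ℤ) - n₀ - 1)
        + 1 / (2 : ℝ) ^ (2 * ((n : ℤ) - n₀)))) := by
  have hx1 : 1 / (2 : ℝ) ^ ((n : ℤ) - n₀ - 1) = 2 * (1 / (2 : ℝ) ^ ((n : ℤ) - n₀)) := by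
    rw [zpow_sub_one₀ two_ne_zero]; field_simp
  have hx2 :
      1 / (2 : ℝ) ^ (2 * ((n : ℤ) - n₀)) = (1 / (2 : ℝ) ^ ((n : ℤ) - n₀)) ^ 2 := by
    rw [mul_comm, zpow_mul, zpow_two]; ring
  have hx : 1 / (2 : ℝ) ^ ((n : ℤ) - n₀) = 2 ^ n₀ / 2 ^ n := by
    rw [zpow_sub₀ two_ne_zero, zpow_natCast, zpow_natCast, one_div_div]
  rw [hx1, hx2, gt_iff_lt]
  set N : ℝ := 2 ^ n
  set x : ℝ := 1 / (2 : ℝ) ^ ((n : ℤ) - n₀)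
  set K := (r - 1) / 2
  have hrK : (r : ℝ) = 2 * K + 1 := by
    obtain ⟨k, rfl⟩ := hodd
    simp [K]
  have hN : 0 < N := by positivity
  have hA : (r : ℝ) + 1 ≤ 2 ^ n₀ := by exact_mod_cast hr2
  have hAN : 2 * 2 ^ n₀ ≤ N := by
    rw [← pow_succ']; exact pow_le_pow_right₀ one_le_two hnn₀
  have hxr : (r + 1) / N ≤ x := by rw [hx]; gcongr
  have hxhalf : x ≤ 1 / 2 := by rw [hx, div_le_iff₀ hN]; linarith
  have hKN : (K : ℝ) < N := by linarith
  refine (one_sub_mul_one_sub_lt_two_div_mul hrK hN (by exact_mod_cast hm) hxr hxhalf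
    hm1 hm2).trans_le ?_
  gcongr
  exact sum_sin_mul_sq_div_sin_sq_ge K hKN m

theorem stmt_6 (r n n₀ m : ℕ) (hr3 : 3 ≤ r) (hodd : Odd r)
    (hn₀ : 0 < n₀) (hnn₀ : n₀ < n) (hr2 : r < 2 ^ n₀) (hm : 0 < m)
    (hm1 : (2 : ℝ) ^ n / r - 1 < m) (hm2 : (m : ℝ) < 2 ^ n / r + 1) :
    (2 / ((2 : ℝ) ^ n * m)) *
        ∑ j ∈ Finset.Icc 1 ((r - 1) / 2),
          Real.sin (π * m * j / 2 ^ n) ^ 2 / Real.sin (π * j / 2 ^ n) ^ 2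
      >
    (1 - 1 / (2 : ℝ) ^ ((n : ℤ) - n₀) - 1 / r) *
      (1 - (π ^ 2 / 36) * (((r : ℝ) + 1) / r + 1 / (2 : ℝ) ^ ((n : ℤ) - n₀ - 1)
        + 1 / (2 : ℝ) ^ (2 * ((n : ℤ) - n₀)))) :=
  stmt_6_general r n n₀ m hodd hnn₀ hr2 hm hm1 hm2
end

section
/- Let κ ≥ 0 be an integer, let r' ≥ 3 be an odd integer, set r = 2^κ · r', let N be a positive integer with r < N, let n be a positive integer with N² ≤ 2^n, and let m be a positive integer with 2^n/r − 1 ≤ m ≤ 2^n/r + 1. Then 2^κ · (2/(2^n·m)) · ∑_{j=1}^{(r'−1)/2} sin²(π·m·j/2^{n−κ}) / sin²(π·j/2^{n−κ}) + (2^κ − 1)·m/2^n ≥ ((1 − π²/(4N²))/(1 + 1/N)) · (2/π²) · ∫_{1/r'}^{1/2 + 1/(2r')} sin²(πx)/x² dx − 3/N + 1/r' − 1/(2^κ·r'). -/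
open Real intervalIntegral


lemma sinc_mono {a b : ℝ} (ha : 0 < a) (hab : a ≤ b) (hb : b ≤ π) :
    Real.sin b / b ≤ Real.sin a / a := by
  have hb0 : 0 < b := lt_of_lt_of_le ha hab
  have key : a / b * Real.sin b ≤ Real.sin a := by
    have hcc := strictConcaveOn_sin_Icc.concaveOn
    have h0 : (0:ℝ) ∈ Set.Icc 0 π := ⟨le_rfl, pi_pos.le⟩
    have hbmem : b ∈ Set.Icc 0 π := ⟨hb0.le, hb⟩
    have hw1 : (0:ℝ) ≤ 1 - a / b := by
      have : a / b ≤ 1 := (div_le_one hb0).2 hab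
      linarith
    have hw2 : (0:ℝ) ≤ a / b := by positivity
    have hsum : (1 - a/b) + (a/b) = 1 := by ring
    have := hcc.2 h0 hbmem hw1 hw2 hsum
    simp only [smul_eq_mul, mul_zero, Real.sin_zero, zero_add, mul_zero] at this
    have hab' : a / b * b = a := div_mul_cancel₀ a hb0.ne'
    rw [hab'] at this
    linarith
  rw [div_le_div_iff₀ hb0 ha]
  have := mul_le_mul_of_nonneg_left key hb0.le
  calc Real.sin b * a = b * (a / b * Real.sin b) := by field_simp
    _ ≤ b * Real.sin a := by nlinarith
    _ = Real.sin a * b := by ring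

lemma f_anti {a b : ℝ} (ha : 0 < a) (hab : a ≤ b) (hb : b ≤ 1) :
    Real.sin (π*b)^2/b^2 ≤ Real.sin (π*a)^2/a^2 := by
  have hpa : 0 < π * a := by positivity
  have hpb : π * a ≤ π * b := by nlinarith [pi_pos]
  have hbpi : π * b ≤ π := by nlinarith [pi_pos]
  have h1 := sinc_mono hpa hpb hbpi
  have hb0 : 0 < b := lt_of_lt_of_le ha hab
  have hsb : 0 ≤ Real.sin (π*b) := Real.sin_nonneg_of_nonneg_of_le_pi (by positivity) hbpi
  have h0 : 0 ≤ Real.sin (π*b) / (π*b) := div_nonneg hsb (by positivity)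
  have := mul_self_le_mul_self h0 h1
  have e1 : Real.sin (π*b)/(π*b) * (Real.sin (π*b)/(π*b)) = Real.sin (π*b)^2/b^2 / π^2 := by
    field_simp
  have e2 : Real.sin (π*a)/(π*a) * (Real.sin (π*a)/(π*a)) = Real.sin (π*a)^2/a^2 / π^2 := by
    field_simp
  rw [e1, e2] at this
  have hpi2 : (0:ℝ) < π^2 := by positivity
  exact (div_le_div_iff_of_pos_right hpi2).mp this

lemma f_intble {c d : ℝ} (hc : 0 < c) (hd : 0 < d) :
    IntervalIntegrable (fun x => Real.sin (π*x)^2/x^2) MeasureTheory.volume c d := by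
  apply ContinuousOn.intervalIntegrable
  apply ContinuousOn.div
  · fun_prop
  · fun_prop
  · intro x hx
    have : min c d ≤ x := hx.1
    have hx0 : 0 < x := lt_of_lt_of_le (lt_min hc hd) this
    positivity

lemma riemann_aux (K : ℕ) (h : ℝ) (hh : 0 < h) (hK1 : ((K:ℝ)+1)*h ≤ 1) :
    (∫ x in h..(((K:ℝ)+1)*h), Real.sin (π*x)^2/x^2)
      ≤ ∑ j ∈ Finset.Icc 1 K, h * (Real.sin (π*((j:ℝ)*h))^2/((j:ℝ)*h)^2) := by
  set F : ℝ → ℝ := fun x => Real.sin (π*x)^2/x^2 with hF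
  have hpt : ∀ i : ℕ, i ≤ K → ((i:ℝ)+1)*h ≤ 1 := by
    intro i hi
    calc ((i:ℝ)+1)*h ≤ ((K:ℝ)+1)*h := by
          have : (i:ℝ) ≤ K := Nat.cast_le.2 hi
          nlinarith
      _ ≤ 1 := hK1
  have hint : ∀ k : ℕ, k < K → IntervalIntegrable F MeasureTheory.volume
      (((k:ℝ)+1)*h) (((k:ℝ)+1+1)*h) := by
    intro k hk
    exact f_intble (by positivity) (by positivity)
  have adj := intervalIntegral.sum_integral_adjacent_intervals
    (a := fun i : ℕ => ((i:ℝ)+1)*h) (f := F) (μ := MeasureTheory.volume) (n := K)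
    (by intro k hk; simpa using hint k hk)
  push_cast at adj
  simp only [Nat.cast_zero, zero_add, one_mul] at adj
  have step : ∀ i ∈ Finset.range K,
      (∫ x in (((i:ℝ)+1)*h)..(((i:ℝ)+1+1)*h), F x) ≤ h * F (((i:ℝ)+1)*h) := by
    intro i hi
    have hiK : i < K := Finset.mem_range.1 hi
    have hle : ((i:ℝ)+1)*h ≤ ((i:ℝ)+1+1)*h := by nlinarith
    have hconst : (∫ _ in (((i:ℝ)+1)*h)..(((i:ℝ)+1+1)*h), F (((i:ℝ)+1)*h))
        = h * F (((i:ℝ)+1)*h) := by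
      rw [intervalIntegral.integral_const, smul_eq_mul]
      ring_nf
    rw [← hconst]
    apply intervalIntegral.integral_mono_on hle (hint i hiK)
      (intervalIntegrable_const)
    intro x hx
    have hx1 : ((i:ℝ)+1)*h ≤ x := hx.1
    have hx2 : x ≤ ((i:ℝ)+1+1)*h := hx.2
    exact f_anti (by positivity) hx1 (le_trans hx2 (by
      have := hpt (i+1) hiK
      push_cast at this ⊢
      linarith))
  calc (∫ x in h..(((K:ℝ)+1)*h), F x)
      = ∑ i ∈ Finset.range K, ∫ x in (((i:ℝ)+1)*h)..(((i:ℝ)+1+1)*h), F x := by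
        rw [adj]
    _ ≤ ∑ i ∈ Finset.range K, h * F (((i:ℝ)+1)*h) := Finset.sum_le_sum step
    _ = ∑ j ∈ Finset.Icc 1 K, h * F ((j:ℝ)*h) := by
        rw [show Finset.Icc 1 K = Finset.Ico 1 (K+1) by rw [Finset.Ico_add_one_right_eq_Icc],
          Finset.sum_Ico_eq_sum_range]
        simp only [Nat.add_sub_cancel]
        apply Finset.sum_congr rfl
        intro i _
        push_cast
        ring_nf

lemma term_bound {M m j v : ℝ} (hM : 0 < M) (hm : 0 < m) (hj : 0 < j) (hjM : j < M)
    (htv : m * j / M ≤ v) (hv1 : v ≤ 1) :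
    m ^ 2 / π ^ 2 * (Real.sin (π * v) ^ 2 / v ^ 2)
      ≤ Real.sin (π * m * j / M) ^ 2 / Real.sin (π * j / M) ^ 2 := by
  have ht0 : 0 < m * j / M := by positivity
  have hv0 : 0 < v := lt_of_lt_of_le ht0 htv
  have hx0 : 0 < π * j / M := by positivity
  have hxπ : π * j / M < π := by
    rw [div_lt_iff₀ hM]
    nlinarith [pi_pos]
  have hsx : 0 < Real.sin (π * j / M) := Real.sin_pos_of_pos_of_lt_pi hx0 hxπ
  have hsq : Real.sin (π * j / M) ^ 2 ≤ (π * j / M) ^ 2 := Real.sin_sq_le_sq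
  have hπv : π * v ≤ π := by nlinarith [pi_pos]
  have h1 : Real.sin (π * v) / (π * v) ≤ Real.sin (π * (m * j / M)) / (π * (m * j / M)) :=
    sinc_mono (by positivity) (by nlinarith [pi_pos]) hπv
  have hsv : 0 ≤ Real.sin (π * v) :=
    Real.sin_nonneg_of_nonneg_of_le_pi (by positivity) hπv
  have h0 : 0 ≤ Real.sin (π * v) / (π * v) := div_nonneg hsv (by positivity)
  have h2 := mul_self_le_mul_self h0 h1
  have e1 : Real.sin (π*v)/(π*v) * (Real.sin (π*v)/(π*v))
      = Real.sin (π*v)^2/(π^2*v^2) := by field_simp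
  have e2 : Real.sin (π*(m*j/M))/(π*(m*j/M)) * (Real.sin (π*(m*j/M))/(π*(m*j/M)))
      = Real.sin (π*(m*j/M))^2/(π^2*(m*j/M)^2) := by
    field_simp
  rw [e1, e2] at h2
  rw [div_le_div_iff₀ (by positivity) (by positivity)] at h2
  have h3 : (m*j/M)^2 * (Real.sin (π*v)^2/v^2) ≤ Real.sin (π*(m*j/M))^2 := by
    rw [show (m*j/M)^2 * (Real.sin (π*v)^2/v^2) = (m*j/M)^2 * Real.sin (π*v)^2/v^2 by ring,
      div_le_iff₀ (by positivity : (0:ℝ) < v^2)]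
    have hπ2 : (0:ℝ) < π^2 := by positivity
    refine le_of_mul_le_mul_left ?_ hπ2
    linear_combination h2
  have h3' : (m*j/M)^2 * (Real.sin (π*v)^2/v^2) ≤ Real.sin (π*m*j/M)^2 := by
    have : π*(m*j/M) = π*m*j/M := by ring
    rwa [this] at h3
  have h4 := div_le_div₀ (sq_nonneg (Real.sin (π*m*j/M))) h3' (by positivity) hsq
  calc m ^ 2 / π ^ 2 * (Real.sin (π * v) ^ 2 / v ^ 2)
      = (m*j/M)^2 * (Real.sin (π*v)^2/v^2) / (π * j / M)^2 := by
        field_simp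
    _ ≤ Real.sin (π * m * j / M) ^ 2 / Real.sin (π * j / M) ^ 2 := h4

set_option maxHeartbeats 1000000 in
theorem stmt_9 (κ r' n N m : ℕ) (hr'3 : 3 ≤ r') (hodd : Odd r')
    (r : ℕ) (hr : r = 2 ^ κ * r') (hN : 0 < N) (hrN : r < N)
    (hn : 0 < n) (hN2 : N ^ 2 ≤ 2 ^ n) (hm : 0 < m)
    (hm1 : (2 : ℝ) ^ n / r - 1 ≤ m) (hm2 : (m : ℝ) ≤ 2 ^ n / r + 1) :
    (2 : ℝ) ^ κ * (2 / ((2 : ℝ) ^ n * m)) *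
        ∑ j ∈ Finset.Icc 1 ((r' - 1) / 2),
          Real.sin (π * m * j / (2 : ℝ) ^ ((n : ℤ) - κ)) ^ 2 /
            Real.sin (π * j / (2 : ℝ) ^ ((n : ℤ) - κ)) ^ 2
      + ((2 : ℝ) ^ κ - 1) * m / 2 ^ n
      ≥
    ((1 - π ^ 2 / (4 * (N : ℝ) ^ 2)) / (1 + 1 / N)) *
        ((2 / π ^ 2) * ∫ x in (1 / (r' : ℝ))..(1 / 2 + 1 / (2 * r')),
          Real.sin (π * x) ^ 2 / x ^ 2)
      - 3 / N + 1 / r' - 1 / ((2 : ℝ) ^ κ * r') := by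
  obtain ⟨K0, hK0⟩ := hodd
  set K : ℕ := (r' - 1) / 2 with hKdef
  have hKr' : r' = 2 * K + 1 := by omega
  have hK1 : 1 ≤ K := by omega
  have hπ := pi_pos
  have hπ2 : (0:ℝ) < π ^ 2 := by positivity
  set P : ℝ := (2:ℝ) ^ n with hPdef
  set Q : ℝ := (2:ℝ) ^ κ with hQdef
  have hP0 : (0:ℝ) < P := by rw [hPdef]; positivity
  have hQ0 : (0:ℝ) < Q := by rw [hQdef]; positivity
  have hQ1 : (1:ℝ) ≤ Q := by rw [hQdef]; exact one_le_pow₀ (by norm_num)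
  have hr'R : (3:ℝ) ≤ (r' : ℝ) := by exact_mod_cast hr'3
  have hr'0 : (0:ℝ) < (r' : ℝ) := by linarith
  have hrR : (r:ℝ) = Q * r' := by rw [hr, hQdef]; push_cast; ring
  have hr0 : (0:ℝ) < (r:ℝ) := by rw [hrR]; exact mul_pos hQ0 hr'0
  have h2κ : 1 ≤ 2 ^ κ := Nat.one_le_two_pow
  have hN4 : 4 ≤ N := by
    have h3r : 3 ≤ r := by
      calc 3 ≤ r' := hr'3
        _ ≤ 2 ^ κ * r' := Nat.le_mul_of_pos_left r' (by omega)
        _ = r := hr.symm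
    omega
  have hNR : (4:ℝ) ≤ (N:ℝ) := by exact_mod_cast hN4
  have hN0 : (0:ℝ) < (N:ℝ) := by linarith
  have hPN2 : ((N:ℝ))^2 ≤ P := by rw [hPdef]; exact_mod_cast hN2
  have hrN1 : (r:ℝ) ≤ (N:ℝ) - 1 := by
    have : (r:ℝ) + 1 ≤ N := by exact_mod_cast hrN
    linarith
  set M : ℝ := (2:ℝ) ^ ((n:ℤ) - κ) with hMdef
  have hMPQ : M = P / Q := by
    rw [hMdef, hPdef, hQdef, zpow_sub₀ (by norm_num : (2:ℝ) ≠ 0), zpow_natCast, zpow_natCast]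
  have hM0 : (0:ℝ) < M := by rw [hMPQ]; exact div_pos hP0 hQ0
  have hQr : 3 * Q ≤ (r:ℝ) := by
    have := mul_le_mul_of_nonneg_left hr'R hQ0.le
    rw [hrR]; linarith
  have hPr2 : (r:ℝ)^2 < P := by
    have h1 : (r:ℝ)^2 ≤ ((N:ℝ)-1)^2 := by nlinarith only [hrN1, hr0]
    nlinarith only [h1, hPN2, hNR]
  have hMr'2 : (r':ℝ)^2 ≤ M := by
    rw [hMPQ, le_div_iff₀ hQ0]
    have h1 : (r':ℝ)^2 * Q ≤ (r:ℝ)^2 := by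
      rw [hrR]
      nlinarith only [hQ1, hQ0, hr'0]
    linarith [hPr2]
  set δ : ℝ := (r:ℝ) / P with hδdef
  have hδ0 : (0:ℝ) ≤ δ := by rw [hδdef]; exact div_nonneg hr0.le hP0.le
  have hδP : δ * P = (r:ℝ) := by rw [hδdef]; field_simp
  have hδN : δ * (N:ℝ)^2 ≤ (N:ℝ) - 1 := by
    have h1 : δ * (N:ℝ)^2 ≤ δ * P := mul_le_mul_of_nonneg_left hPN2 hδ0
    rw [hδP] at h1
    linarith [hrN1]
  have hδN1 : δ * (N:ℝ) ≤ 1 := by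
    nlinarith only [hδN, hN0, hδ0]
  have hδ1N : δ ≤ 1/(N:ℝ) := by
    rw [le_div_iff₀ hN0]; exact hδN1
  have hδhalf : δ ≤ 1/2 := by nlinarith only [hδN1, hNR, hδ0]
  have hδQP : δ / (r':ℝ) = Q / P := by
    rw [hδdef, hrR]; field_simp
  set h : ℝ := (1 + δ) / (r':ℝ) with hhdef
  have hh0 : (0:ℝ) < h := by
    rw [hhdef]; exact div_pos (by linarith) hr'0
  have hr'K : (r':ℝ) = 2*(K:ℝ)+1 := by exact_mod_cast hKr'
  have hK1R : (1:ℝ) ≤ (K:ℝ) := by exact_mod_cast hK1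
  have hKh1 : ((K:ℝ)+1)*h ≤ 1 := by
    rw [hhdef, show ((K:ℝ)+1)*((1+δ)/r') = ((K+1)*(1+δ))/r' by ring, div_le_one hr'0]
    have hmul := mul_le_mul_of_nonneg_left hδhalf (show (0:ℝ) ≤ (K:ℝ)+1 by linarith)
    rw [hr'K]
    nlinarith only [hmul, hK1R]
  have hMh : M * h = P / (r:ℝ) + 1 := by
    rw [hMPQ, hhdef, hδdef, hrR]
    field_simp
  have hMh' : M * (1 - δ) / (r':ℝ) = P / (r:ℝ) - 1 := by
    rw [hMPQ, hδdef, hrR]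
    field_simp
  have hm0R : (0:ℝ) < (m:ℝ) := by exact_mod_cast hm
  -- sum bound
  set S := ∑ j ∈ Finset.Icc 1 K,
      Real.sin (π * (m:ℝ) * (j:ℝ) / M) ^ 2 / Real.sin (π * (j:ℝ) / M) ^ 2 with hSdef
  set T := ∑ j ∈ Finset.Icc 1 K,
      Real.sin (π*((j:ℝ)*h))^2/((j:ℝ)*h)^2 with hTdef
  have hST : (m:ℝ)^2/π^2 * T ≤ S := by
    rw [hTdef, hSdef, Finset.mul_sum]
    apply Finset.sum_le_sum
    intro j hj
    obtain ⟨hj1, hjK⟩ := Finset.mem_Icc.1 hj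
    have hj0 : (0:ℝ) < (j:ℝ) := by exact_mod_cast hj1
    have hjKR : (j:ℝ) ≤ (K:ℝ) := by exact_mod_cast hjK
    have hjM : (j:ℝ) < M := by
      have h33 := mul_le_mul_of_nonneg_left hr'R hr'0.le
      nlinarith only [hjKR, hr'K, hMr'2, h33, hr'R, hr'0]
    have hmMh : (m:ℝ) ≤ M * h := by rw [hMh]; linarith [hm2]
    apply term_bound hM0 hm0R hj0 hjM
    · rw [div_le_iff₀ hM0]
      nlinarith only [mul_le_mul_of_nonneg_left hmMh hj0.le]
    · have hjK1 : (j:ℝ) ≤ (K:ℝ)+1 := by linarith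
      nlinarith only [mul_le_mul_of_nonneg_right hjK1 hh0.le, hKh1]
  -- Riemann bound
  have hRie := riemann_aux K h hh0 hKh1
  set J := ∫ x in h..(((K:ℝ)+1)*h), Real.sin (π*x)^2/x^2 with hJdef
  have hJT : J ≤ h * T := by
    rw [hTdef, Finset.mul_sum]
    exact hRie
  have hhK : h ≤ ((K:ℝ)+1)*h := le_mul_of_one_le_left hh0.le (by linarith)
  have hJ0 : 0 ≤ J := by
    rw [hJdef]
    apply intervalIntegral.integral_nonneg hhK
    intro u hu
    positivity
  set I := ∫ x in (1/(r':ℝ))..(1/2 + 1/(2*(r':ℝ))), Real.sin (π*x)^2/x^2 with hIdef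
  have hend : 1/2 + 1/(2*(r':ℝ)) = ((K:ℝ)+1)/r' := by
    rw [hr'K]; field_simp; ring
  have h1r'0 : (0:ℝ) < 1/(r':ℝ) := div_pos one_pos hr'0
  have hlep : 1/(r':ℝ) ≤ 1/2 + 1/(2*(r':ℝ)) := by
    have h1 : 1/(r':ℝ) ≤ 1/2 := by
      rw [div_le_div_iff₀ hr'0 two_pos]; linarith
    have h2 : (0:ℝ) ≤ 1/(2*(r':ℝ)) := by positivity
    linarith
  have hI0 : 0 ≤ I := by
    rw [hIdef]
    apply intervalIntegral.integral_nonneg hlep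
    intro u hu
    positivity
  have hfub : ∀ x : ℝ, 0 < x → Real.sin (π*x)^2/x^2 ≤ π^2 := by
    intro x hx
    have h1 : Real.sin (π*x)^2 ≤ (π*x)^2 := Real.sin_sq_le_sq
    rw [div_le_iff₀ (by positivity : (0:ℝ) < x^2)]
    nlinarith only [h1]
  have hIub : I ≤ π^2 * ((K:ℝ)/r') := by
    have hend0 : (0:ℝ) < 1/2 + 1/(2*(r':ℝ)) := lt_of_lt_of_le h1r'0 hlep
    have hmono := intervalIntegral.integral_mono_on (a := 1/(r':ℝ))
      (b := 1/2 + 1/(2*(r':ℝ))) (μ := MeasureTheory.volume)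
      (f := fun x => Real.sin (π*x)^2/x^2) (g := fun _ => π^2) hlep
      (f_intble h1r'0 hend0)
      intervalIntegrable_const
      (fun x hx => hfub x (lt_of_lt_of_le h1r'0 hx.1))
    rw [intervalIntegral.integral_const, smul_eq_mul] at hmono
    calc I ≤ (1/2 + 1/(2*(r':ℝ)) - 1/r') * π^2 := hmono
      _ = π^2 * ((K:ℝ)/r') := by rw [hend]; field_simp; ring
  have h1r' : 1/(r':ℝ) ≤ h := by
    rw [hhdef, div_le_div_iff₀ hr'0 hr'0]
    nlinarith only [hδ0, hr'0]
  have hKend0 : (0:ℝ) < ((K:ℝ)+1)*h := by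
    have : (0:ℝ) < (K:ℝ)+1 := by linarith
    exact mul_pos this hh0
  have hKr0 : (0:ℝ) < ((K:ℝ)+1)/(r':ℝ) := div_pos (by linarith) hr'0
  have hsplit : I ≤ π^2 * (δ/(r':ℝ)) + J := by
    have int1 : IntervalIntegrable (fun x => Real.sin (π*x)^2/x^2)
        MeasureTheory.volume (1/(r':ℝ)) h := f_intble h1r'0 hh0
    have int2 : IntervalIntegrable (fun x => Real.sin (π*x)^2/x^2)
        MeasureTheory.volume h (((K:ℝ)+1)*h) := f_intble hh0 hKend0
    have int4 : IntervalIntegrable (fun x => Real.sin (π*x)^2/x^2)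
        MeasureTheory.volume (((K:ℝ)+1)/(r':ℝ)) (((K:ℝ)+1)*h) := f_intble hKr0 hKend0
    have int5 : IntervalIntegrable (fun x => Real.sin (π*x)^2/x^2)
        MeasureTheory.volume (1/(r':ℝ)) (((K:ℝ)+1)/(r':ℝ)) := f_intble h1r'0 hKr0
    have hadd : (∫ x in (1/(r':ℝ))..h, Real.sin (π*x)^2/x^2) + J
        = ∫ x in (1/(r':ℝ))..(((K:ℝ)+1)*h), Real.sin (π*x)^2/x^2 :=
      intervalIntegral.integral_add_adjacent_intervals int1 int2
    have hadd2 : I + (∫ x in (((K:ℝ)+1)/(r':ℝ))..(((K:ℝ)+1)*h), Real.sin (π*x)^2/x^2)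
        = ∫ x in (1/(r':ℝ))..(((K:ℝ)+1)*h), Real.sin (π*x)^2/x^2 := by
      rw [hIdef, hend]
      exact intervalIntegral.integral_add_adjacent_intervals int5 int4
    have htail : 0 ≤ ∫ x in (((K:ℝ)+1)/(r':ℝ))..(((K:ℝ)+1)*h), Real.sin (π*x)^2/x^2 := by
      apply intervalIntegral.integral_nonneg
      · rw [div_le_iff₀ hr'0]
        have h1hr : 1 ≤ h * (r':ℝ) := by
          have := (div_le_iff₀ hr'0).mp h1r'
          linarith
        nlinarith only [h1hr, hK1R]
      · intro u hu; positivity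
    have hfirst : (∫ x in (1/(r':ℝ))..h, Real.sin (π*x)^2/x^2) ≤ π^2 * (δ/(r':ℝ)) := by
      have hmono := intervalIntegral.integral_mono_on (a := 1/(r':ℝ)) (b := h)
        (μ := MeasureTheory.volume)
        (f := fun x => Real.sin (π*x)^2/x^2) (g := fun _ => π^2) h1r'
        int1 intervalIntegrable_const
        (fun x hx => hfub x (lt_of_lt_of_le h1r'0 hx.1))
      rw [intervalIntegral.integral_const, smul_eq_mul] at hmono
      calc (∫ x in (1/(r':ℝ))..h, Real.sin (π*x)^2/x^2) ≤ (h - 1/r') * π^2 := hmono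
        _ = π^2 * (δ/(r':ℝ)) := by rw [hhdef]; field_simp; ring
    linarith
  -- endgame
  set A : ℝ := (1 - π ^ 2 / (4 * (N : ℝ) ^ 2)) / (1 + 1 / (N:ℝ)) with hAdef
  set X : ℝ := 2 / π ^ 2 * I with hXdef
  have hX0 : 0 ≤ X := by
    rw [hXdef]; exact mul_nonneg (by positivity) hI0
  have hX1 : X ≤ 1 := by
    rw [hXdef]
    calc 2/π^2 * I ≤ 2/π^2 * (π^2 * ((K:ℝ)/r')) :=
          mul_le_mul_of_nonneg_left hIub (by positivity)
      _ = 2*(K:ℝ)/r' := by field_simp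
      _ ≤ 1 := by
          rw [div_le_one hr'0, hr'K]; linarith
  set C : ℝ := (1 - δ) / (1 + δ) with hCdef
  have hC0 : 0 ≤ C := by
    rw [hCdef]; exact div_nonneg (by linarith) (by linarith)
  have hC1 : C ≤ 1 := by
    rw [hCdef, div_le_one (by linarith)]; linarith
  have hC2 : 1 - 2*δ ≤ C := by
    rw [hCdef, le_div_iff₀ (by linarith)]
    nlinarith only [hδ0]
  have hA : A ≤ (N:ℝ)/((N:ℝ)+1) := by
    have hd : (0:ℝ) < 1 + 1/(N:ℝ) := by positivity
    have hnum : 1 - π^2/(4*(N:ℝ)^2) ≤ 1 := by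
      have : (0:ℝ) ≤ π^2/(4*(N:ℝ)^2) := by positivity
      linarith
    rw [hAdef]
    calc (1 - π ^ 2 / (4 * (N : ℝ) ^ 2)) / (1 + 1 / (N:ℝ)) ≤ 1 / (1 + 1/(N:ℝ)) := by
          gcongr
      _ = (N:ℝ)/((N:ℝ)+1) := by field_simp
  have h3QP : 3 * (Q/P) ≤ δ := by
    rw [hδdef, show 3*(Q/P) = 3*Q/P by ring]
    gcongr
  have hQP0 : (0:ℝ) ≤ Q/P := le_of_lt (div_pos hQ0 hP0)
  have hfinal : C * X + 3/(N:ℝ) ≥ A * X + 3 * (Q/P) := by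
    have hNpos : (0:ℝ) < (N:ℝ)+1 := by linarith
    rcases le_or_gt A C with hAC | hAC
    · have h1 : A * X ≤ C * X := mul_le_mul_of_nonneg_right hAC hX0
      have h2 : 3 * (Q/P) ≤ 3/(N:ℝ) := by
        have hd3 : δ ≤ 3/(N:ℝ) := by
          rw [le_div_iff₀ hN0]; linarith [hδN1]
        linarith
      linarith
    · have h1 : (A - C) * X ≤ (A - C) * 1 :=
        mul_le_mul_of_nonneg_left hX1 (by linarith)
      have hNN : (N:ℝ)/((N:ℝ)+1) = 1 - 1/((N:ℝ)+1) := by field_simp; ring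
      have h5 : (0:ℝ) < 1/((N:ℝ)+1) := div_pos one_pos hNpos
      have h2 : A - C ≤ 3/(N:ℝ) - 3*(Q/P) := by
        have h6 : 3*δ ≤ 3/(N:ℝ) := by
          rw [show (3:ℝ)/(N:ℝ) = 3*(1/(N:ℝ)) by ring]
          linarith [hδ1N]
        nlinarith only [hA, hC2, hNN, h5, h3QP, h6, hδ0]
      nlinarith only [h1, h2]
  -- put the pieces together
  have hb0 : (0:ℝ) ≤ Q * (2/(P*(m:ℝ))) :=
    le_of_lt (mul_pos hQ0 (div_pos two_pos (mul_pos hP0 hm0R)))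
  have hb1 : Q * (2/(P*(m:ℝ))) * ((m:ℝ)^2/π^2 * T) ≤ Q * (2/(P*(m:ℝ))) * S :=
    mul_le_mul_of_nonneg_left hST hb0
  have heq1 : Q * (2/(P*(m:ℝ))) * ((m:ℝ)^2/π^2 * T) = 2*(m:ℝ)/(M*π^2) * T := by
    rw [hMPQ]
    field_simp
  have hTJ : J/h ≤ T := by
    rw [div_le_iff₀ hh0]
    linarith [hJT]
  have hMπ0 : (0:ℝ) < M*π^2 := mul_pos hM0 hπ2
  have hb2 : 2*(m:ℝ)/(M*π^2) * (J/h) ≤ 2*(m:ℝ)/(M*π^2) * T :=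
    mul_le_mul_of_nonneg_left hTJ (le_of_lt (div_pos (by linarith) hMπ0))
  have hmge : M*(1-δ)/(r':ℝ) ≤ (m:ℝ) := by
    rw [hMh']; exact hm1
  have hCm : C ≤ (m:ℝ)/(M*h) := by
    rw [hCdef, div_le_div_iff₀ (by linarith) (mul_pos hM0 hh0)]
    have e : M*h = M*(1+δ)/(r':ℝ) := by rw [hhdef]; ring
    rw [e]
    have hmul := mul_le_mul_of_nonneg_right hmge (show (0:ℝ) ≤ 1+δ by linarith)
    calc (1-δ)*(M*(1+δ)/(r':ℝ)) = M*(1-δ)/(r':ℝ)*(1+δ) := by ring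
      _ ≤ (m:ℝ)*(1+δ) := hmul
  have hb3 : 2/π^2 * C * J ≤ 2*(m:ℝ)/(M*π^2) * (J/h) := by
    have hc1 : 2/π^2 * C ≤ 2/π^2 * ((m:ℝ)/(M*h)) :=
      mul_le_mul_of_nonneg_left hCm (by positivity)
    have hc2 : 2/π^2 * C * J ≤ 2/π^2 * ((m:ℝ)/(M*h)) * J :=
      mul_le_mul_of_nonneg_right hc1 hJ0
    have hc3 : 2/π^2 * ((m:ℝ)/(M*h)) * J = 2*(m:ℝ)/(M*π^2) * (J/h) := by
      have hne1 : h ≠ 0 := hh0.ne'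
      have hne2 : M ≠ 0 := hM0.ne'
      have hne3 : π ≠ 0 := hπ.ne'
      field_simp
    linarith [hc2, hc3]
  have hb4 : 2/π^2 * C * (I - π^2*(δ/(r':ℝ))) ≤ 2/π^2 * C * J :=
    mul_le_mul_of_nonneg_left (by linarith [hsplit]) (mul_nonneg (by positivity) hC0)
  have heq2 : 2/π^2 * C * (I - π^2*(δ/(r':ℝ))) = C*X - C*(2*(δ/(r':ℝ))) := by
    rw [hXdef]
    field_simp
  have hb5 : C*X - 2*(Q/P) ≤ C*X - C*(2*(δ/(r':ℝ))) := by
    rw [hδQP]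
    have hmul := mul_le_mul_of_nonneg_right hC1 (show (0:ℝ) ≤ 2*(Q/P) by linarith [hQP0])
    linarith
  have ha : 1/(r':ℝ) - 1/(Q*(r':ℝ)) - Q/P ≤ (Q-1)*(m:ℝ)/P := by
    have hm1' : P/(r:ℝ) - 1 ≤ (m:ℝ) := hm1
    have hc1 : (Q-1)*(P/(r:ℝ)-1)/P ≤ (Q-1)*(m:ℝ)/P := by
      gcongr
    have hc2 : (Q-1)*(P/(r:ℝ)-1)/P = 1/(r':ℝ) - 1/(Q*(r':ℝ)) - (Q-1)/P := by
      rw [hrR]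
      field_simp
    have hc3 : (Q-1)/P ≤ Q/P := by gcongr; linarith
    linarith [hc1, hc2, hc3]
  have hδQP2 : C*(2*(δ/(r':ℝ))) = C*(2*(Q/P)) := by rw [hδQP]
  -- final chain
  have hchain : Q * (2/(P*(m:ℝ))) * S + (Q-1)*(m:ℝ)/P
      ≥ A * X - 3/(N:ℝ) + 1/(r':ℝ) - 1/(Q*(r':ℝ)) := by
    have t1 : 2*(m:ℝ)/(M*π^2) * T ≤ Q * (2/(P*(m:ℝ))) * S := by
      rw [← heq1]; exact hb1
    linarith [t1, hb2, hb3, hb4, heq2, hb5, ha, hfinal]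
  exact hchain
end

section
/- Let κ ≥ 0 be an integer, let r' ≥ 3 be an odd integer, set r = 2^κ · r', let N be a positive integer with r < N, let n be a positive integer with N² ≤ 2^n, and let m be a positive integer with 2^n/r − 1 ≤ m ≤ 2^n/r + 1. Then for every integer j with 1 ≤ j ≤ (r'−1)/2, sin²(π·m·r·(j/r')/2^n) ≥ sin²(π·j/r' − π·j/2^{n−κ}). -/
/-!
Write `θ = π j / r'` and `δ = r / 2ⁿ`. Since `r = 2^κ r'`, the right-hand angle is `θ (1 - δ)`,
and the hypothesis on `m` says that the left-hand angle is `θ y` with `|y - 1| ≤ δ`. As `2 j ≤ r'`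
we have `θ ≤ π / 2`, so `θ y` lies in `[θ (1 - δ), π - θ (1 - δ)]`, on which `sin` is bounded
below by its value at the left endpoint.
-/

open Real

namespace Real

theorem sin_le_sin_of_le_of_le_pi_sub {L x : ℝ} (hL : 0 ≤ L) (hLx : L ≤ x) (hx : x ≤ π - L) :
    sin L ≤ sin x := by
  rcases le_total x (π / 2) with h | h
  · exact strictMonoOn_sin.monotoneOn ⟨by linarith, by linarith⟩ ⟨by linarith, h⟩ hLx
  · rw [← sin_pi_sub x]
    exact strictMonoOn_sin.monotoneOn ⟨by linarith, by linarith⟩ ⟨by linarith, by linarith⟩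
      (by linarith)

theorem sin_sq_le_sin_sq_of_le_of_le_pi_sub {L x : ℝ} (hL : 0 ≤ L) (hLx : L ≤ x)
    (hx : x ≤ π - L) : sin L ^ 2 ≤ sin x ^ 2 :=
  pow_le_pow_left₀ (sin_nonneg_of_nonneg_of_le_pi hL (by linarith))
    (sin_le_sin_of_le_of_le_pi_sub hL hLx hx) 2

theorem sin_sq_mul_sub_le_sin_sq_mul {θ δ y : ℝ} (hθ : 0 ≤ θ) (h2θ : 2 * θ ≤ π) (hδ : δ ≤ 1)
    (hy : |y - 1| ≤ δ) : sin (θ * (1 - δ)) ^ 2 ≤ sin (θ * y) ^ 2 := by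
  obtain ⟨hy₁, hy₂⟩ := abs_sub_le_iff.mp hy
  apply sin_sq_le_sin_sq_of_le_of_le_pi_sub (mul_nonneg hθ (by linarith))
  · exact mul_le_mul_of_nonneg_left (by linarith) hθ
  · nlinarith

end Real

theorem abs_mul_div_sub_one_le {t r m : ℝ} (ht : 0 < t) (hr : 0 < r) (h : |m - t / r| ≤ 1) :
    |m * r / t - 1| ≤ r / t := by
  have hmr : m * r / t - 1 = (m - t / r) * (r / t) := by field_simp
  rw [hmr, abs_mul, abs_of_pos (div_pos hr ht)]
  exact mul_le_of_le_one_left (div_pos hr ht).le h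

theorem stmt_11_general (κ r' n N m : ℕ) (hr'3 : 3 ≤ r')
    (r : ℕ) (hr : r = 2 ^ κ * r') (hrN : r < N)
    (hN2 : N ^ 2 ≤ 2 ^ n)
    (hm1 : (2 : ℝ) ^ n / r - 1 ≤ m) (hm2 : (m : ℝ) ≤ 2 ^ n / r + 1)
    (j : ℕ) (hj2 : j ≤ (r' - 1) / 2) :
    Real.sin (π * m * r * ((j : ℝ) / r') / 2 ^ n) ^ 2 ≥
      Real.sin (π * j / r' - π * j / (2 : ℝ) ^ ((n : ℤ) - κ)) ^ 2 := by
  have hr'0 : (0 : ℝ) < r' := by norm_cast; omega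
  have hr0 : (0 : ℝ) < r := by rw [hr]; push_cast; positivity
  have hrR : (r : ℝ) = 2 ^ κ * r' := by rw [hr]; push_cast; ring
  have hr2n : (r : ℝ) ≤ 2 ^ n := by
    exact_mod_cast (hrN.trans_le (Nat.le_self_pow two_ne_zero N)).le.trans hN2
  have h2j : (2 * j : ℝ) ≤ r' := by norm_cast; omega
  have hlhs : π * m * r * ((j : ℝ) / r') / 2 ^ n = π * j / r' * (m * r / 2 ^ n) := by ring
  have hrhs : π * j / r' - π * j / (2 : ℝ) ^ ((n : ℤ) - κ) = π * j / r' * (1 - r / 2 ^ n) := by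
    rw [zpow_sub₀ two_ne_zero, zpow_natCast, zpow_natCast, hrR]
    field_simp
  rw [ge_iff_le, hlhs, hrhs]
  apply sin_sq_mul_sub_le_sin_sq_mul (by positivity)
  · calc 2 * (π * j / r') = π * (2 * j / r') := by ring
      _ ≤ π := mul_le_of_le_one_right pi_pos.le ((div_le_one hr'0).mpr h2j)
  · exact div_le_one_of_le₀ hr2n (by positivity)
  · exact abs_mul_div_sub_one_le (by positivity) hr0
      (abs_sub_le_iff.mpr ⟨by linarith, by linarith⟩)

theorem stmt_11 (κ r' n N m : ℕ) (hr'3 : 3 ≤ r') (hodd : Odd r')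
    (r : ℕ) (hr : r = 2 ^ κ * r') (hN : 0 < N) (hrN : r < N)
    (hn : 0 < n) (hN2 : N ^ 2 ≤ 2 ^ n) (hm : 0 < m)
    (hm1 : (2 : ℝ) ^ n / r - 1 ≤ m) (hm2 : (m : ℝ) ≤ 2 ^ n / r + 1)
    (j : ℕ) (hj1 : 1 ≤ j) (hj2 : j ≤ (r' - 1) / 2) :
    Real.sin (π * m * r * ((j : ℝ) / r') / 2 ^ n) ^ 2 ≥
      Real.sin (π * j / r' - π * j / (2 : ℝ) ^ ((n : ℤ) - κ)) ^ 2 :=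
  stmt_11_general κ r' n N m hr'3 r hr hrN hN2 hm1 hm2 j hj2
end

section
/- Let r, m, n be positive integers, let q be a nonnegative integer, and suppose 2^{n+q}/r − 1 ≤ m ≤ 2^{n+q}/r + 1. Let r' ≥ 3 be an odd integer and let j be an integer with 1 ≤ j ≤ (r'−1)/2. Then for every integer h, sin²(π·m·r·(j/r' + h)/2^{n+q}) ≥ sin²(π·m·r·(j/r')/2^{n+q}) · (1 − (π·h·r/2^{n+q})²) − 2·π·|h|·r/2^{n+q}. -/
/-!
Write `N = 2^(n+q)` and `A = π m r (j/r') / N`. The shifted argument equals `A + ε + hπ` with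
`ε = π h (m r - N) / N`, and the hypothesis on `m` says exactly `|m r - N| ≤ r`, so
`|ε| ≤ s := π |h| r / N`. The shift by `hπ` does not change `sin²`, and `sin²` is 1-Lipschitz,
so `sin²` of the shifted argument is at least `sin² A - s`, which dominates
`sin² A (1 - s²) - 2 s`.
-/

open Real

namespace Real

theorem sin_sq_add_int_mul_pi (x : ℝ) (k : ℤ) : sin (x + k * π) ^ 2 = sin x ^ 2 := by
  rw [sin_add_int_mul_pi, mul_pow, ← sq_abs ((-1 : ℝ) ^ k), abs_neg_one_zpow, one_pow, one_mul]

/-- Through `sin² x = (1 - cos 2x) / 2`; factoring `sin x ^ 2 - sin y ^ 2` naively loses a factor 2. -/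
theorem abs_sin_sq_sub_sin_sq_le (x y : ℝ) : |sin x ^ 2 - sin y ^ 2| ≤ |x - y| := by
  have hsq : ∀ z : ℝ, sin z ^ 2 = 1 / 2 - cos (2 * z) / 2 := fun z => by
    rw [sin_sq, cos_sq]; ring
  calc |sin x ^ 2 - sin y ^ 2| = |cos (2 * y) - cos (2 * x)| / 2 := by
        rw [hsq, hsq, ← abs_two, ← abs_div, abs_two]; congr 1; ring
    _ ≤ |2 * y - 2 * x| / 2 := div_le_div_of_nonneg_right (abs_cos_sub_cos_le _ _) two_pos.le
    _ = |x - y| := by rw [← mul_sub, abs_mul, abs_two, abs_sub_comm]; ring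

theorem sin_sq_sub_le_sin_sq_add {x ε s : ℝ} (hε : |ε| ≤ s) : sin x ^ 2 - s ≤ sin (x + ε) ^ 2 := by
  have := (abs_le.mp (abs_sin_sq_sub_sin_sq_le (x + ε) x)).1
  rw [add_sub_cancel_left] at this
  linarith [neg_abs_le ε]

end Real

theorem abs_mul_sub_le_of_div_sub_one_le {a m r : ℝ} (hr : 0 < r) (h₁ : a / r - 1 ≤ m)
    (h₂ : m ≤ a / r + 1) : |m * r - a| ≤ r := by
  rw [div_sub_one hr.ne', div_le_iff₀ hr] at h₁
  rw [div_add_one hr.ne', le_div_iff₀ hr] at h₂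
  exact abs_le.mpr ⟨by linarith, by linarith⟩

theorem stmt_14_general (r m n q : ℕ) (hr : 0 < r)
    (hm1 : (2 : ℝ) ^ (n + q) / r - 1 ≤ m) (hm2 : (m : ℝ) ≤ 2 ^ (n + q) / r + 1)
    (r' : ℕ)
    (j : ℕ) (h : ℤ) :
    Real.sin (π * m * r * ((j : ℝ) / r' + h) / 2 ^ (n + q)) ^ 2 ≥
      Real.sin (π * m * r * ((j : ℝ) / r') / 2 ^ (n + q)) ^ 2 *
          (1 - (π * h * r / 2 ^ (n + q)) ^ 2)
        - 2 * π * |(h : ℝ)| * r / 2 ^ (n + q) := by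
  set N : ℝ := 2 ^ (n + q)
  set A : ℝ := π * m * r * ((j : ℝ) / r') / N
  set s : ℝ := π * |(h : ℝ)| * r / N
  have hN : 0 < N := by positivity
  have hs : 0 ≤ s := by positivity
  have hshift : π * m * r * ((j : ℝ) / r' + h) / N = A + π * h * (m * r - N) / N + h * π := by
    simp only [A]; field_simp; ring
  have hε : |π * h * (m * r - N) / N| ≤ s := by
    rw [abs_div, abs_mul, abs_mul, abs_of_pos pi_pos, abs_of_pos hN]
    simp only [s]
    gcongr
    exact abs_mul_sub_le_of_div_sub_one_le (by positivity) hm1 hm2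
  have hlip := sin_sq_sub_le_sin_sq_add (x := A) hε
  have hsq : (π * h * r / N) ^ 2 = s ^ 2 := by
    rw [← sq_abs]; simp only [s, abs_div, abs_mul, abs_of_pos pi_pos, abs_of_pos hN, Nat.abs_cast]
  rw [ge_iff_le, hshift, sin_sq_add_int_mul_pi, hsq,
    show 2 * π * |(h : ℝ)| * r / N = 2 * s by ring]
  nlinarith [mul_nonneg (sq_nonneg (sin A)) (sq_nonneg s)]

theorem stmt_14 (r m n q : ℕ) (hr : 0 < r) (hm : 0 < m) (hn : 0 < n)
    (hm1 : (2 : ℝ) ^ (n + q) / r - 1 ≤ m) (hm2 : (m : ℝ) ≤ 2 ^ (n + q) / r + 1)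
    (r' : ℕ) (hr'3 : 3 ≤ r') (hodd : Odd r')
    (j : ℕ) (hj1 : 1 ≤ j) (hj2 : j ≤ (r' - 1) / 2) (h : ℤ) :
    Real.sin (π * m * r * ((j : ℝ) / r' + h) / 2 ^ (n + q)) ^ 2 ≥
      Real.sin (π * m * r * ((j : ℝ) / r') / 2 ^ (n + q)) ^ 2 *
          (1 - (π * h * r / 2 ^ (n + q)) ^ 2)
        - 2 * π * |(h : ℝ)| * r / 2 ^ (n + q) :=
  stmt_14_general r m n q hr hm1 hm2 r' j h
end

section
/- For every nonnegative integer q, ∑_{h=−2^{q+1}}^{2^{q+1}−1} (2/π²) · ∫_0^{1/2} sin²(πx)/(x + h)² dx = 2·Si(2^{q+2}·π)/π, where Si(y) = ∫_0^y (sin t)/t dt. In particular, for q = 0 the sum ∑_{h=−2}^{1} (2/π²) · ∫_0^{1/2} sin²(πx)/(x + h)² dx equals (2/π²)·∫_0^2 sin²(πx)/x² dx = 2·Si(4π)/π ≈ 0.9499. -/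
open Real intervalIntegral

/-!
Since `sin (π x) ^ 2` has period `1`, the `h`-th integral of the sum is
`∫ y in h..h + 1/2, sin (π y) ^ 2 / y ^ 2`; by evenness the terms `h` and `-h - 1` together give
the integral over `[h, h + 1]`, so the sum over `-M ≤ h < M` is `∫ x in 0..M, sin (π x) ^ 2 / x ^ 2`.
Integrating by parts against `-1/x`, the boundary terms vanish because `sin (π M) = 0`, and what
remains is `∫ x in 0..M, π sin (2π x) / x = π Si (2π M)`. Writing the integrands with `Real.sinc`
makes them continuous.
-/

theorem integral_congr_of_ne_zero {E : Type*} [NormedAddCommGroup E] [NormedSpace ℝ E]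
    {f g : ℝ → E} (h : ∀ x ≠ 0, f x = g x) (a b : ℝ) :
    ∫ x in a..b, f x = ∫ x in a..b, g x :=
  integral_congr_ae <| by
    filter_upwards [MeasureTheory.compl_mem_ae_iff.mpr (MeasureTheory.measure_singleton (0 : ℝ))]
      with x hx _ using h x hx

theorem sin_sq_pi_mul_div_sq {x : ℝ} (hx : x ≠ 0) :
    sin (π * x) ^ 2 / x ^ 2 = (π * sinc (π * x)) ^ 2 := by
  rw [sinc_of_ne_zero (mul_ne_zero pi_ne_zero hx)]
  field_simp

theorem integral_sin_sq_pi_mul_div_sq (a b : ℝ) :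
    ∫ x in a..b, sin (π * x) ^ 2 / x ^ 2 = ∫ x in a..b, (π * sinc (π * x)) ^ 2 :=
  integral_congr_of_ne_zero (fun _ hx => sin_sq_pi_mul_div_sq hx) a b

theorem sin_sq_pi_mul_add_int (x : ℝ) (h : ℤ) : sin (π * (x + h)) ^ 2 = sin (π * x) ^ 2 := by
  rw [sq, sq, mul_add, mul_comm π (h : ℝ)]
  exact (sin_antiperiodic.mul sin_antiperiodic).int_mul h (π * x)

theorem integral_sin_sq_pi_mul_div_add_int_sq (h : ℤ) (a b : ℝ) :
    ∫ x in a..b, sin (π * x) ^ 2 / (x + h) ^ 2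
      = ∫ x in a + h..b + h, (π * sinc (π * x)) ^ 2 := by
  rw [← integral_sin_sq_pi_mul_div_sq, ← integral_comp_add_right]
  simp_rw [sin_sq_pi_mul_add_int]

theorem integral_sin_sq_pi_mul_div_add_int_sq_pair (h : ℤ) :
    (∫ x in (0 : ℝ)..1 / 2, sin (π * x) ^ 2 / (x + h) ^ 2)
      + ∫ x in (0 : ℝ)..1 / 2, sin (π * x) ^ 2 / (x + ↑(-h - 1)) ^ 2
      = ∫ x in (h : ℝ)..h + 1, (π * sinc (π * x)) ^ 2 := by
  have hF : Continuous fun x => (π * sinc (π * x)) ^ 2 := by fun_prop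
  have hneg := integral_comp_neg (a := (h : ℝ) + 1 / 2) (b := h + 1)
    fun x => (π * sinc (π * x)) ^ 2
  simp only [mul_neg, sinc_neg] at hneg
  rw [integral_sin_sq_pi_mul_div_add_int_sq, integral_sin_sq_pi_mul_div_add_int_sq]
  push_cast
  rw [show 0 + (-(h : ℝ) - 1) = -(h + 1) by ring,
    show 1 / 2 + (-(h : ℝ) - 1) = -(h + 1 / 2) by ring, ← hneg, zero_add, add_comm (1 / 2 : ℝ)]
  exact integral_add_adjacent_intervals (hF.intervalIntegrable _ _) (hF.intervalIntegrable _ _)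

theorem Finset.sum_Icc_neg_eq_sum_range {M : Type*} [AddCommMonoid M] (g : ℤ → M) (n : ℕ) :
    ∑ h ∈ Finset.Icc (-n : ℤ) (n - 1), g h = ∑ k ∈ Finset.range n, (g k + g (-k - 1)) := by
  induction n with
  | zero => simp
  | succ n ih =>
    have hIcc : Finset.Icc (-(n + 1 : ℕ) : ℤ) ((n + 1 : ℕ) - 1)
        = insert (-n - 1 : ℤ) (insert (n : ℤ) (Finset.Icc (-n : ℤ) (n - 1))) := by
      ext; simp only [Finset.mem_Icc, Finset.mem_insert]; omega
    rw [hIcc, Finset.sum_insert (by simp; omega), Finset.sum_insert (by simp), ih,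
      Finset.sum_range_succ]
    abel

theorem sum_integral_sin_sq_pi_mul_div_add_int_sq (n : ℕ) :
    ∑ h ∈ Finset.Icc (-n : ℤ) (n - 1), ∫ x in (0 : ℝ)..1 / 2, sin (π * x) ^ 2 / (x + h) ^ 2
      = ∫ x in (0 : ℝ)..n, sin (π * x) ^ 2 / x ^ 2 := by
  have hF : Continuous fun x => (π * sinc (π * x)) ^ 2 := by fun_prop
  rw [Finset.sum_Icc_neg_eq_sum_range, integral_sin_sq_pi_mul_div_sq]
  simp_rw [integral_sin_sq_pi_mul_div_add_int_sq_pair]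
  exact_mod_cast sum_integral_adjacent_intervals (a := fun k : ℕ => (k : ℝ))
    fun _ _ => hF.intervalIntegrable (μ := MeasureTheory.volume) _ _

theorem hasDerivAt_sin_sq_pi_mul_div {x : ℝ} (hx : x ≠ 0) :
    HasDerivAt (fun x => sin (π * x) ^ 2 / x)
      (2 * π ^ 2 * sinc (2 * π * x) - (π * sinc (π * x)) ^ 2) x := by
  have hsin : HasDerivAt (fun x => sin (π * x) ^ 2) (2 * sin (π * x) * (cos (π * x) * π)) x := by
    simpa using ((hasDerivAt_id x).const_mul π).sin.fun_pow 2
  refine (hsin.div (hasDerivAt_id' x) hx).congr_deriv ?_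
  rw [sinc_of_ne_zero (by positivity), sinc_of_ne_zero (by positivity),
    show 2 * π * x = 2 * (π * x) by ring, sin_two_mul]
  field_simp

theorem integral_sq_pi_mul_sinc_pi_mul (n : ℕ) :
    ∫ x in (0 : ℝ)..n, (π * sinc (π * x)) ^ 2 = π * ∫ t in (0 : ℝ)..2 * π * n, sinc t := by
  -- `sin (π x) ^ 2 / x`, extended continuously by `0` at `0`
  set G : ℝ → ℝ := fun x => π * sin (π * x) * sinc (π * x)
  have hG : ∀ x ≠ 0, G x = sin (π * x) ^ 2 / x := by
    intro x hx
    simp only [G, sinc_of_ne_zero (mul_ne_zero pi_ne_zero hx)]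
    field_simp
  have hGn : G n = 0 := by simp [G, mul_comm π, sin_nat_mul_pi]
  have hG0 : G 0 = 0 := by simp [G]
  have hderiv : ∀ x ∈ Set.Ioo (0 : ℝ) n,
      HasDerivAt G (2 * π ^ 2 * sinc (2 * π * x) - (π * sinc (π * x)) ^ 2) x := by
    intro x hx
    refine (hasDerivAt_sin_sq_pi_mul_div hx.1.ne').congr_of_eventuallyEq ?_
    filter_upwards [eventually_ne_nhds hx.1.ne'] with y hy using hG y hy
  have hftc := integral_eq_sub_of_hasDerivAt_of_le (Nat.cast_nonneg n)
    (by fun_prop : Continuous G).continuousOn hderiv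
    (Continuous.intervalIntegrable (by fun_prop) _ _)
  have hsinc : ∫ x in (0 : ℝ)..n, 2 * π ^ 2 * sinc (2 * π * x)
      = π * ∫ t in (0 : ℝ)..2 * π * n, sinc t := by
    rw [integral_const_mul, integral_comp_mul_left (fun t => sinc t) (by positivity), mul_zero,
      smul_eq_mul]
    field_simp
  rw [hGn, hG0, sub_zero, integral_sub, hsinc, sub_eq_zero] at hftc
  · exact hftc.symm
  all_goals exact Continuous.intervalIntegrable (by fun_prop) _ _

theorem integral_sin_sq_pi_mul_div_sq_nat (n : ℕ) :
    ∫ x in (0 : ℝ)..n, sin (π * x) ^ 2 / x ^ 2 = π * ∫ t in (0 : ℝ)..2 * π * n, sin t / t := by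
  rw [integral_sin_sq_pi_mul_div_sq, integral_sq_pi_mul_sinc_pi_mul,
    integral_congr_of_ne_zero (fun _ ht => sinc_of_ne_zero ht)]

theorem stmt_16 :
    (∀ q : ℕ,
      ∑ h ∈ Finset.Icc (-(2 ^ (q + 1)) : ℤ) (2 ^ (q + 1) - 1),
          (2 / π ^ 2) * ∫ x in (0 : ℝ)..(1 / 2), Real.sin (π * x) ^ 2 / (x + h) ^ 2
        = 2 * (∫ t in (0 : ℝ)..(2 ^ (q + 2) * π), Real.sin t / t) / π)
    ∧
    (∑ h ∈ Finset.Icc (-2 : ℤ) 1,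
          (2 / π ^ 2) * ∫ x in (0 : ℝ)..(1 / 2), Real.sin (π * x) ^ 2 / (x + h) ^ 2
        = (2 / π ^ 2) * ∫ x in (0 : ℝ)..2, Real.sin (π * x) ^ 2 / x ^ 2)
    ∧
    ((2 / π ^ 2) * (∫ x in (0 : ℝ)..2, Real.sin (π * x) ^ 2 / x ^ 2)
        = 2 * (∫ t in (0 : ℝ)..(4 * π), Real.sin t / t) / π) := by
  refine ⟨fun q => ?_, ?_, ?_⟩
  · have hcast : (2 ^ (q + 1) : ℤ) = ((2 ^ (q + 1) : ℕ) : ℤ) := by push_cast; rfl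
    rw [← Finset.mul_sum, hcast, sum_integral_sin_sq_pi_mul_div_add_int_sq,
      integral_sin_sq_pi_mul_div_sq_nat]
    rw [show 2 * π * ((2 ^ (q + 1) : ℕ) : ℝ) = 2 ^ (q + 2) * π by push_cast; ring]
    field_simp
  · simpa [← Finset.mul_sum] using sum_integral_sin_sq_pi_mul_div_add_int_sq 2
  · have h2 := integral_sin_sq_pi_mul_div_sq_nat 2
    rw [show 2 * π * ((2 : ℕ) : ℝ) = 4 * π by push_cast; ring, Nat.cast_ofNat] at h2
    rw [h2]
    field_simp
end

section
/- Let κ ≥ 0 be an integer, let r' ≥ 3 be an odd integer, set r = 2^κ · r', let N be a positive integer with 2r < N, let n be a positive integer with N² ≤ 2^n, let m be a positive integer, and let h be an integer with 1 ≤ |h| ≤ 2. Then ∑_{s=1}^{r−1} (1/(2^n·m)) · |∑_{k=0}^{m−1} exp(2πi·k·r·(⌊s·2^n/r⌉ + h)/2^n)|² = 2^κ · (1/(2^n·m)) · ∑_{j=1}^{(r'−1)/2} [ sin²(π·m·r·(h + j/r')/2^n)/sin²(π·r·(h + j/r')/2^n) + sin²(π·m·r·(h − j/r')/2^n)/sin²(π·r·(h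 − j/r')/2^n) ] + (2^κ − 1) · (1/(2^n·m)) · sin²(π·m·r·h/2^n)/sin²(π·r·h/2^n). -/
/-!
Put `n = κ + K`, so that `s·2^n/r = s·2^K/r'`. The phase `r(⌊s·2^n/r⌉ + h)/2^n` differs by the
integer `s` from `r(h - δ)/2^n`, where `δ = c/r' - ⌊c/r'⌉` for the residue `c = s·2^K mod r'`.
Summing the geometric series turns each term into `sin²(πmr(h - δ)/2^n)/sin²(πr(h - δ)/2^n)`;
the denominator does not vanish because `0 < r|h - δ| < 2^n`. As `s` runs over `0 ≤ s < r`, the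
residue `c` runs `2^κ` times through all residues mod `r'` (multiplication by `2^K` is invertible
mod the odd `r'`), and the residues `j` and `r' - j` give `δ = ±j/r'`. Removing `s = 0`, whose
term is the one at `δ = 0`, accounts for the coefficient `2^κ - 1`.
-/

open Real Complex

lemma norm_sq_exp_mul_I_sub_one (x : ℝ) :
    ‖Complex.exp (x * I) - 1‖ ^ 2 = 4 * Real.sin (x / 2) ^ 2 := by
  rw [mul_comm, Complex.norm_exp_I_mul_ofReal_sub_one, norm_mul, mul_pow, Real.norm_eq_abs,
    sq_abs]
  norm_num

lemma norm_sq_sum_range_exp (m : ℕ) {φ : ℝ} (hφ : Real.sin φ ≠ 0) :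
    ‖∑ k ∈ Finset.range m, Complex.exp (2 * k * φ * I)‖ ^ 2
      = Real.sin (m * φ) ^ 2 / Real.sin φ ^ 2 := by
  set z := Complex.exp ((2 * φ : ℝ) * I) with hz_def
  have hz : z ≠ 1 := by
    intro h1
    have := norm_sq_exp_mul_I_sub_one (2 * φ)
    rw [← hz_def, h1, sub_self, norm_zero, show 2 * φ / 2 = φ by ring] at this
    exact hφ (pow_eq_zero_iff two_ne_zero |>.mp (by linarith))
  have hzm : z ^ m = Complex.exp ((2 * (m * φ) : ℝ) * I) := by
    rw [← Complex.exp_nat_mul]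
    push_cast
    ring_nf
  have hgeom : ∑ k ∈ Finset.range m, Complex.exp (2 * k * φ * I) = (z ^ m - 1) / (z - 1) := by
    rw [← geom_sum_eq hz]
    refine Finset.sum_congr rfl fun k _ => ?_
    rw [← Complex.exp_nat_mul]
    push_cast
    ring_nf
  rw [hgeom, hzm, norm_div, div_pow, norm_sq_exp_mul_I_sub_one, norm_sq_exp_mul_I_sub_one]
  field_simp

lemma Real.sin_ne_zero_of_abs_lt_pi {x : ℝ} (hx : x ≠ 0) (hxπ : |x| < π) : Real.sin x ≠ 0 := by
  rw [Ne, Real.sin_eq_zero_iff_of_lt_of_lt (neg_lt_of_abs_lt hxπ) (lt_of_abs_lt hxπ)]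
  exact hx

namespace Finset

variable {M : Type*} [AddCommMonoid M]

lemma sum_range_mul_mod (f : ℕ → M) (a b : ℕ) :
    ∑ i ∈ range (a * b), f (i % b) = a • ∑ i ∈ range b, f i := by
  induction a with
  | zero => simp
  | succ a ih =>
    rw [Nat.succ_mul, sum_range_add, ih, succ_nsmul]
    congr 1
    refine sum_congr rfl fun i hi => ?_
    rw [Nat.mul_add_mod_self_right, Nat.mod_eq_of_lt (mem_range.mp hi)]

lemma sum_range_mul_mod_of_coprime (f : ℕ → M) {b t : ℕ}
    (ht : Nat.Coprime b t) :
    ∑ c ∈ range b, f (c * t % b) = ∑ c ∈ range b, f c := by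
  have hmaps : Set.MapsTo (fun c => c * t % b) (range b : Set ℕ) (range b : Set ℕ) := by
    intro c hc
    simp only [coe_range, Set.mem_Iio] at hc ⊢
    exact Nat.mod_lt _ (by omega)
  have hinj : Set.InjOn (fun c => c * t % b) (range b : Set ℕ) := by
    intro c hc c' hc' hcc'
    simp only [coe_range, Set.mem_Iio] at hc hc'
    have := Nat.ModEq.cancel_right_of_coprime ht hcc'
    rwa [Nat.ModEq, Nat.mod_eq_of_lt hc, Nat.mod_eq_of_lt hc'] at this
  exact sum_nbij _ hmaps hinj (surjOn_of_injOn_of_card_le _ hmaps hinj le_rfl) fun _ _ => rfl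

lemma sum_range_two_mul_add_one (G : ℕ → M) (k : ℕ) :
    ∑ c ∈ range (2 * k + 1), G c = G 0 + ∑ j ∈ Icc 1 k, (G j + G (2 * k + 1 - j)) := by
  rw [sum_add_distrib, ← Ico_add_one_right_eq_Icc, sum_Ico_reflect _ _ (by omega),
    show 2 * k + 1 + 1 - (k + 1) = k + 1 by omega, show 2 * k + 1 + 1 - 1 = 2 * k + 1 by omega,
    range_eq_Ico, ← sum_Ico_consecutive _ (zero_le_one) (by omega : 1 ≤ 2 * k + 1),
    ← sum_Ico_consecutive _ (by omega : 1 ≤ k + 1) (by omega : k + 1 ≤ 2 * k + 1)]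
  simp

lemma add_sum_Icc_mul_mod (f : ℕ → M) {a b t : ℕ}
    (ht : Nat.Coprime b t) (hab : 0 < a * b) :
    f 0 + ∑ s ∈ Icc 1 (a * b - 1), f (s * t % b) = a • ∑ c ∈ range b, f c := by
  have hrange : range (a * b) = insert 0 (Icc 1 (a * b - 1)) := by
    ext s
    simp only [mem_range, mem_insert, mem_Icc]
    omega
  rw [← sum_range_mul_mod_of_coprime f ht, ← sum_range_mul_mod, hrange, sum_insert (by simp)]
  simp only [Nat.zero_mod, zero_mul, Nat.mod_mul_mod]

end Finset

noncomputable def roundRem (x : ℝ) : ℝ := x - round x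

@[simp]
lemma roundRem_zero : roundRem 0 = 0 := by simp [roundRem]

lemma abs_roundRem_le (x : ℝ) : |roundRem x| ≤ 1 / 2 := abs_sub_round x

lemma roundRem_natCast_div_mod (a b : ℕ) :
    roundRem (a / b) = roundRem ((a % b : ℕ) / b) := by
  rcases Nat.eq_zero_or_pos b with rfl | hb
  · simp
  have hsplit : (a : ℝ) / b = ((a / b : ℕ) : ℝ) + ((a % b : ℕ) : ℝ) / b := by
    field_simp
    exact_mod_cast (Nat.div_add_mod a b).symm
  rw [roundRem, roundRem, hsplit, round_natCast_add, Int.cast_add, Int.cast_natCast]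
  ring

lemma roundRem_mul_two_pow_add_div {s κ K b r : ℕ} (hr : r = 2 ^ κ * b) :
    roundRem (s * 2 ^ (κ + K) / r) = roundRem ((s * 2 ^ K % b : ℕ) / b) := by
  rw [← roundRem_natCast_div_mod]
  congr 1
  rcases Nat.eq_zero_or_pos b with rfl | hb
  · simp [hr]
  rw [hr]
  push_cast
  field_simp
  ring

lemma round_eq_zero_of_abs_lt {x : ℝ} (hx : |x| < 1 / 2) : round x = 0 := by
  rw [round_eq_zero_iff, Set.mem_Ico]
  exact ⟨by linarith [neg_abs_le x], lt_of_abs_lt hx⟩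

lemma abs_natCast_div_lt_half {j b : ℕ} (hjb : 2 * j < b) : |(j : ℝ) / b| < 1 / 2 := by
  have hb : (0 : ℝ) < b := by exact_mod_cast (by omega : 0 < b)
  have hjb' : (2 * j : ℝ) < b := by exact_mod_cast hjb
  rw [abs_of_nonneg (by positivity), div_lt_iff₀ hb]
  linarith

lemma roundRem_div_of_two_mul_lt {j b : ℕ} (hjb : 2 * j < b) : roundRem (j / b) = j / b := by
  rw [roundRem, round_eq_zero_of_abs_lt (abs_natCast_div_lt_half hjb), Int.cast_zero, sub_zero]

lemma roundRem_sub_div_of_two_mul_lt {j b : ℕ} (hjb : 2 * j < b) :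
    roundRem ((b - j : ℕ) / b) = -(j / b) := by
  have hb : (b : ℝ) ≠ 0 := by exact_mod_cast (by omega : b ≠ 0)
  have hsplit : ((b - j : ℕ) : ℝ) / b = ((1 : ℕ) : ℝ) + -((j : ℝ) / b) := by
    rw [Nat.cast_sub (by omega)]
    field_simp
    ring
  have hround : round (-((j : ℝ) / b)) = 0 :=
    round_eq_zero_of_abs_lt (by rw [abs_neg]; exact abs_natCast_div_lt_half hjb)
  rw [hsplit, roundRem, round_natCast_add, hround]
  push_cast
  ring

lemma sum_range_roundRem_div {M : Type*} [AddCommMonoid M] (g : ℝ → M) (k : ℕ) :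
    ∑ c ∈ Finset.range (2 * k + 1), g (roundRem (c / (2 * k + 1 : ℕ)))
      = g 0 + ∑ j ∈ Finset.Icc 1 k,
          (g (j / (2 * k + 1 : ℕ)) + g (-(j / (2 * k + 1 : ℕ)))) := by
  rw [Finset.sum_range_two_mul_add_one]
  congr 1
  · simp
  · refine Finset.sum_congr rfl fun j hj => ?_
    have hjk : 2 * j < 2 * k + 1 := by rw [Finset.mem_Icc] at hj; omega
    rw [roundRem_div_of_two_mul_lt hjk, roundRem_sub_div_of_two_mul_lt hjk]

noncomputable def sinRatioSq (n m r : ℕ) (x : ℝ) : ℝ :=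
  Real.sin (π * m * r * x / 2 ^ n) ^ 2 / Real.sin (π * r * x / 2 ^ n) ^ 2

lemma exp_round_eq_exp_roundRem (n r s k : ℕ) (hr : r ≠ 0) (h : ℝ) :
    Complex.exp (2 * π * I * k * r * ((round ((s : ℝ) * 2 ^ n / r) : ℤ) + (h : ℂ)) / 2 ^ n)
      = Complex.exp (2 * k * (π * r * (h - roundRem (s * 2 ^ n / r)) / 2 ^ n : ℝ) * I) := by
  have harg : 2 * π * I * k * r * ((round ((s : ℝ) * 2 ^ n / r) : ℤ) + (h : ℂ)) / 2 ^ n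
      = 2 * k * (π * r * (h - roundRem (s * 2 ^ n / r)) / 2 ^ n : ℝ) * I
        + (k * s : ℕ) * (2 * π * I) := by
    have hrC : (r : ℂ) ≠ 0 := by exact_mod_cast hr
    simp only [roundRem]
    push_cast
    field_simp
    ring
  rw [harg, Complex.exp_add, Complex.exp_nat_mul_two_pi_mul_I, mul_one]

lemma norm_sq_sum_exp_round_add (m n r s : ℕ) {h : ℝ} (hr : 0 < r) (hh : 1 / 2 < |h|)
    (hbound : r * (|h| + 1 / 2) < 2 ^ n) :
    ‖∑ k ∈ Finset.range m, Complex.exp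
        (2 * π * I * k * r * ((round ((s : ℝ) * 2 ^ n / r) : ℤ) + (h : ℂ)) / 2 ^ n)‖ ^ 2
      = sinRatioSq n m r (h - roundRem (s * 2 ^ n / r)) := by
  set x := h - roundRem (s * 2 ^ n / r)
  have hd := abs_roundRem_le (s * 2 ^ n / r)
  have hx0 : x ≠ 0 := by
    intro hx
    have : |h| ≤ 1 / 2 := by rwa [sub_eq_zero.mp hx]
    linarith
  have hxπ : |π * r * x / 2 ^ n| < π := by
    have hx : |x| ≤ |h| + 1 / 2 := (abs_sub _ _).trans (by linarith)
    rw [abs_div, abs_mul, abs_mul, abs_of_pos pi_pos, Nat.abs_cast,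
      abs_of_pos (pow_pos two_pos n : (0 : ℝ) < 2 ^ n),
      div_lt_iff₀ (by positivity), mul_assoc]
    gcongr
    calc (r : ℝ) * |x| ≤ r * (|h| + 1 / 2) := by gcongr
      _ < 2 ^ n := hbound
  have hsin := Real.sin_ne_zero_of_abs_lt_pi
    (div_ne_zero (mul_ne_zero (mul_ne_zero pi_ne_zero (by positivity)) hx0) (by positivity))
    hxπ
  simp only [exp_round_eq_exp_roundRem n r s _ hr.ne' h]
  rw [norm_sq_sum_range_exp m hsin, sinRatioSq]
  ring_nf

theorem stmt_17_general (κ r' n N m : ℕ) (hodd : Odd r')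
    (r : ℕ) (hr : r = 2 ^ κ * r') (h2r : 2 * r < N)
    (hN2 : N ^ 2 ≤ 2 ^ n)
    (h : ℤ) (hh1 : 1 ≤ |h|) (hh2 : |h| ≤ 2) :
    ∑ s ∈ Finset.Icc 1 (r - 1),
        (1 / ((2 : ℝ) ^ n * m)) *
          (‖∑ k ∈ Finset.range m,
            Complex.exp (2 * Real.pi * Complex.I * k * r *
              (((round (((s : ℝ) * 2 ^ n) / r) : ℤ) : ℂ) + (h : ℂ)) / 2 ^ n)‖) ^ 2
      =
    (2 : ℝ) ^ κ * (1 / ((2 : ℝ) ^ n * m)) *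
        ∑ j ∈ Finset.Icc 1 ((r' - 1) / 2),
          (Real.sin (Real.pi * m * r * ((h : ℝ) + (j : ℝ) / r') / 2 ^ n) ^ 2 /
              Real.sin (Real.pi * r * ((h : ℝ) + (j : ℝ) / r') / 2 ^ n) ^ 2
            + Real.sin (Real.pi * m * r * ((h : ℝ) - (j : ℝ) / r') / 2 ^ n) ^ 2 /
              Real.sin (Real.pi * r * ((h : ℝ) - (j : ℝ) / r') / 2 ^ n) ^ 2)
      + ((2 : ℝ) ^ κ - 1) * (1 / ((2 : ℝ) ^ n * m)) *
          (Real.sin (Real.pi * m * r * h / 2 ^ n) ^ 2 /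
            Real.sin (Real.pi * r * h / 2 ^ n) ^ 2) := by
  obtain ⟨M, rfl⟩ := hodd
  rw [show (2 * M + 1 - 1) / 2 = M by omega]
  have hr0 : 0 < r := hr ▸ Nat.mul_pos (by positivity) (by omega)
  have h4r : 4 * r < 2 ^ n := by nlinarith [Nat.pow_le_pow_left h2r 2]
  have hκn : κ ≤ n := by
    have : 2 ^ κ ≤ r := hr ▸ Nat.le_mul_of_pos_right _ (by omega)
    exact (Nat.pow_le_pow_iff_right one_lt_two).mp (by omega)
  obtain ⟨K, rfl⟩ := Nat.exists_eq_add_of_le hκn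
  have hh : (1 / 2 : ℝ) < |(h : ℝ)| :=
    (by norm_num : (1 / 2 : ℝ) < 1).trans_le (by exact_mod_cast hh1)
  have hbound : (r : ℝ) * (|(h : ℝ)| + 1 / 2) < 2 ^ (κ + K) := by
    have : |(h : ℝ)| ≤ 2 := by exact_mod_cast hh2
    have : (4 * r : ℝ) < 2 ^ (κ + K) := by exact_mod_cast h4r
    nlinarith [(r.cast_nonneg : (0 : ℝ) ≤ r)]
  have hcop : Nat.Coprime (2 * M + 1) (2 ^ K) :=
    Nat.Coprime.pow_right _ (Nat.coprime_two_right.mpr (odd_two_mul_add_one M))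
  set g : ℝ → ℝ := fun y => 1 / ((2 : ℝ) ^ (κ + K) * m) * sinRatioSq (κ + K) m r (h - y)
  have htotal := Finset.add_sum_Icc_mul_mod (fun c => g (roundRem (c / (2 * M + 1 : ℕ)))) hcop
    (hr ▸ hr0)
  rw [← hr, sum_range_roundRem_div, Nat.cast_zero, zero_div, roundRem_zero] at htotal
  rw [← Complex.ofReal_intCast h]
  simp only [norm_sq_sum_exp_round_add m (κ + K) r _ hr0 hh hbound,
    roundRem_mul_two_pow_add_div hr]
  simp only [g, sinRatioSq, sub_neg_eq_add, sub_zero, Finset.sum_add_distrib, ← Finset.mul_sum,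
    nsmul_eq_mul, Nat.cast_pow, Nat.cast_ofNat] at htotal ⊢
  linear_combination htotal

theorem stmt_17 (κ r' n N m : ℕ) (hr'3 : 3 ≤ r') (hodd : Odd r')
    (r : ℕ) (hr : r = 2 ^ κ * r') (hN : 0 < N) (h2r : 2 * r < N)
    (hn : 0 < n) (hN2 : N ^ 2 ≤ 2 ^ n) (hm : 0 < m)
    (h : ℤ) (hh1 : 1 ≤ |h|) (hh2 : |h| ≤ 2) :
    ∑ s ∈ Finset.Icc 1 (r - 1),
        (1 / ((2 : ℝ) ^ n * m)) *
          (‖∑ k ∈ Finset.range m,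
            Complex.exp (2 * Real.pi * Complex.I * k * r *
              (((round (((s : ℝ) * 2 ^ n) / r) : ℤ) : ℂ) + (h : ℂ)) / 2 ^ n)‖) ^ 2
      =
    (2 : ℝ) ^ κ * (1 / ((2 : ℝ) ^ n * m)) *
        ∑ j ∈ Finset.Icc 1 ((r' - 1) / 2),
          (Real.sin (Real.pi * m * r * ((h : ℝ) + (j : ℝ) / r') / 2 ^ n) ^ 2 /
              Real.sin (Real.pi * r * ((h : ℝ) + (j : ℝ) / r') / 2 ^ n) ^ 2
            + Real.sin (Real.pi * m * r * ((h : ℝ) - (j : ℝ) / r') / 2 ^ n) ^ 2 /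
              Real.sin (Real.pi * r * ((h : ℝ) - (j : ℝ) / r') / 2 ^ n) ^ 2)
      + ((2 : ℝ) ^ κ - 1) * (1 / ((2 : ℝ) ^ n * m)) *
          (Real.sin (Real.pi * m * r * h / 2 ^ n) ^ 2 /
            Real.sin (Real.pi * r * h / 2 ^ n) ^ 2) :=
  stmt_17_general κ r' n N m hodd r hr h2r hN2 h hh1 hh2
end
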